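/- arXiv:2501.00784 — 7 statements merged into one kernel-verified Lean document; each statement's English description precedes it below -/
import Mathlib

section
/- Every run of the sequence (d'_k)_{k≥1} has length 1 or 2; that is, b_n ∈ {1, 2} for all n ≥ 1, where b_n is the length of the n'th run of (d'_k)_{k≥1}. -/
/-- `e` enumerates the ending positions of the runs of the sequence `s`
(whose terms are `s 1, s 2, s 3, …`; the value `s 0` is irrelevant).
A run is a maximal block of consecutive identical values; the `n`'th run
(`n ≥ 1`) occupies positions `e (n-1) + 1, …, e n`. -/
def IsRunEnds {α : Type*} (s : ℕ → α) (e : ℕ → ℕ) : Prop :=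
  e 0 = 0 ∧ StrictMono e ∧
    (∀ n, 1 ≤ n → ∀ i, e (n - 1) < i → i ≤ e n → s i = s (e n)) ∧
    (∀ n, 1 ≤ n → s (e n) ≠ s (e n + 1))

/-- The regular paperfolding sequence over `{0,1}`: `q 0 = 0`,
`q (2n) = q n` for `n ≥ 1`, `q (4n+1) = 0` and `q (4n+3) = 1` for `n ≥ 0`. -/
def IsRegularPaperfolding (q : ℕ → ℕ) : Prop :=
  (∀ n, q n = 0 ∨ q n = 1) ∧ q 0 = 0 ∧
    (∀ n, 1 ≤ n → q (2 * n) = q n) ∧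
    (∀ n, q (4 * n + 1) = 0) ∧ (∀ n, q (4 * n + 3) = 1)

/-- The first difference sequence `d` of `q`: `d 1 = 1` and
`d n = q n - q (n-1)` for `n ≥ 2`. (The value at `0` is irrelevant.) -/
def dseq (q : ℕ → ℕ) (n : ℕ) : ℤ :=
  if n = 1 then 1 else (q n : ℤ) - (q (n - 1) : ℤ)

/-- `d' n = |d n|`, as a natural number. -/
def dabs (q : ℕ → ℕ) (n : ℕ) : ℕ := (dseq q n).natAbs

lemma q_odd_ne {q : ℕ → ℕ} (hq : IsRegularPaperfolding q) (k : ℕ) :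
    q (2 * k + 1) ≠ q (2 * k + 3) := by
  obtain ⟨-, -, -, h1, h3⟩ := hq
  rcases Nat.even_or_odd k with ⟨m, hm⟩ | ⟨m, hm⟩
  · have a := h1 m
    have b := h3 m
    have e1 : 2 * k + 1 = 4 * m + 1 := by omega
    have e2 : 2 * k + 3 = 4 * m + 3 := by omega
    rw [e1, e2, a, b]; omega
  · have a := h3 m
    have b := h1 (m + 1)
    have e1 : 2 * k + 1 = 4 * m + 3 := by omega
    have e2 : 2 * k + 3 = 4 * (m + 1) + 1 := by omega
    rw [e1, e2, a, b]; omega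

lemma dabs_eq_imp {q : ℕ → ℕ} (hq : IsRegularPaperfolding q) (n : ℕ) (hn : 2 ≤ n)
    (h : dabs q n = dabs q (n + 1)) : q (n - 1) = q (n + 1) := by
  have ha := hq.1 (n - 1)
  have hb := hq.1 n
  have hc := hq.1 (n + 1)
  have h1 : n ≠ 1 := by omega
  have h2 : n + 1 ≠ 1 := by omega
  have h3 : n + 1 - 1 = n := by omega
  simp only [dabs, dseq, if_neg h1, if_neg h2, h3] at h
  omega

lemma no_three_consec {q : ℕ → ℕ} (hq : IsRegularPaperfolding q) (i : ℕ) (hi : 1 ≤ i)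
    (h1 : dabs q i = dabs q (i + 1)) (h2 : dabs q (i + 1) = dabs q (i + 2)) : False := by
  rcases Nat.lt_or_ge i 2 with h | h
  · -- i = 1
    have hi1 : i = 1 := by omega
    subst hi1
    have hq2 : q 2 = q 1 := hq.2.2.1 1 (by omega)
    have ha : dabs q 1 = 1 := by simp [dabs, dseq]
    have hb : dabs q 2 = 0 := by simp [dabs, dseq, hq2]
    norm_num at h1
    omega
  · have key1 : q (i - 1) = q (i + 1) := dabs_eq_imp hq i h h1
    have key2 : q i = q (i + 2) := by
      have := dabs_eq_imp hq (i + 1) (by omega) h2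
      simpa using this
    rcases Nat.even_or_odd i with ⟨k, hk⟩ | ⟨k, hk⟩
    · -- i even, i ≥ 2, so i - 1 = 2(k-1)+1
      have hk1 : 1 ≤ k := by omega
      have e1 : i - 1 = 2 * (k - 1) + 1 := by omega
      have e2 : i + 1 = 2 * (k - 1) + 3 := by omega
      exact q_odd_ne hq (k - 1) (by rw [← e1, ← e2]; exact key1)
    · have e1 : i = 2 * k + 1 := by omega
      have e2 : i + 2 = 2 * k + 3 := by omega
      exact q_odd_ne hq k (by rw [← e1, ← e2]; exact key2)

/-- every run of `(d'_k)_{k ≥ 1}` has length 1 or 2, i.e.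
`b n = e n - e (n-1) ∈ {1, 2}` for all `n ≥ 1`, where `e` enumerates the
ending positions of the runs of `d'`. -/
theorem cloitre_runLengths_of_dabs_mem_one_two
    (q : ℕ → ℕ) (hq : IsRegularPaperfolding q)
    (e : ℕ → ℕ) (he : IsRunEnds (dabs q) e) :
    ∀ n, 1 ≤ n → e n - e (n - 1) = 1 ∨ e n - e (n - 1) = 2 := by
  intro n hn
  obtain ⟨h0, hmono, hrun, hend⟩ := he
  have hlt : e (n - 1) < e n := hmono (by omega)
  by_contra hcon
  push_neg at hcon
  have h3 : e (n - 1) + 3 ≤ e n := by omega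
  have i := e (n - 1) + 1
  have s1 := hrun n hn (e (n - 1) + 1) (by omega) (by omega)
  have s2 := hrun n hn (e (n - 1) + 2) (by omega) (by omega)
  have s3 := hrun n hn (e (n - 1) + 3) (by omega) (by omega)
  exact no_three_consec hq (e (n - 1) + 1) (by omega)
    (by rw [s1]; rw [show e (n-1) + 1 + 1 = e (n-1) + 2 by omega, s2])
    (by rw [show e (n-1) + 1 + 1 = e (n-1) + 2 by omega, s2,
            show e (n-1) + 1 + 2 = e (n-1) + 3 by omega, s3])
end

section
/- The run-length sequence (b_n)_{n≥1} of (d'_k)_{k≥1} is self-generating in Cloitre's sense: b_1 = 1 and, for every n ≥ 1, the sum of the entries appearing in the n'th run of (b_k)_{k≥1} equals 2·b_n. -/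
/-- If `e` enumerates run ends of `s`, `e n = a`, `s` is constant on `(a, k]`
(expressed as no change point strictly between `a` and `k`) and `k` is a change
point, then `e (n+1) = k`. -/
lemma runEnds_next {α : Type*} {s : ℕ → α} {e : ℕ → ℕ} (he : IsRunEnds s e)
    {n a k : ℕ} (hen : e n = a) (hak : a < k)
    (hconst : ∀ i, a < i → i < k → s i = s (i + 1))
    (hch : s k ≠ s (k + 1)) : e (n + 1) = k := by
  obtain ⟨h0, hm, hrun, hne⟩ := he
  have h1 : a < e (n + 1) := hen ▸ hm (Nat.lt_succ_self n)
  have hpred : e (n + 1 - 1) = a := by simpa using hen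
  rcases lt_trichotomy (e (n + 1)) k with h | h | h
  · exact absurd (hconst _ h1 h) (hne (n + 1) (by omega))
  · exact h
  · exfalso
    have hk : s k = s (e (n + 1)) := hrun (n + 1) (by omega) k (by omega) (by omega)
    have hk1 : s (k + 1) = s (e (n + 1)) := hrun (n + 1) (by omega) (k + 1) (by omega) (by omega)
    exact hch (hk.trans hk1.symm)

lemma exists_block (c : ℕ → ℕ) (hmono : ∀ m, c m < c (m + 1)) :
    ∀ N a k : ℕ, a ≤ N → c a < k → k ≤ c N →
    ∃ m, a ≤ m ∧ m < N ∧ c m < k ∧ k ≤ c (m + 1) := by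
  intro N
  induction N with
  | zero =>
    intro a k hab h1 h2
    have ha : a = 0 := by omega
    subst ha
    exact absurd h2 (by omega)
  | succ N ih =>
    intro a k hab h1 h2
    have hcb := hmono N
    have hab' : a ≤ N := by
      by_contra h
      have : a = N + 1 := by omega
      subst this
      omega
    by_cases hk : k ≤ c N
    · obtain ⟨m, h3, h4, h5, h6⟩ := ih a k hab' h1 hk
      exact ⟨m, h3, by omega, h5, h6⟩
    · exact ⟨N, hab', by omega, by omega, h2⟩

/-- Index in `e` of the even position `2m`, as a function of `m`. -/
def cfun (s : ℕ → ℕ) (m : ℕ) : ℕ := 1 + m + ∑ j ∈ Finset.Icc 2 m, s j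

lemma cfun_zero (s : ℕ → ℕ) : cfun s 0 = 1 := by
  unfold cfun
  rw [Finset.Icc_eq_empty (by omega)]
  simp

lemma cfun_one (s : ℕ → ℕ) : cfun s 1 = 2 := by
  unfold cfun
  rw [Finset.Icc_eq_empty (by omega)]
  simp

lemma cfun_succ (s : ℕ → ℕ) (m : ℕ) (hm : 1 ≤ m) :
    cfun s (m + 1) = cfun s m + 1 + s (m + 1) := by
  unfold cfun
  rw [Finset.sum_Icc_succ_top (by omega : 2 ≤ m + 1)]
  ring

lemma cfun_mono (s : ℕ → ℕ) (m : ℕ) : cfun s m < cfun s (m + 1) := by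
  rcases Nat.eq_zero_or_pos m with h | h
  · subst h
    rw [cfun_zero, cfun_one]
    omega
  · rw [cfun_succ s m h]
    omega

lemma cfun_strict (s : ℕ → ℕ) : ∀ x y : ℕ, x < y → cfun s x < cfun s y := by
  intro x y
  induction y with
  | zero => omega
  | succ y ih =>
    intro hxy
    rcases Nat.lt_succ_iff_lt_or_eq.mp hxy with h | h
    · exact lt_trans (ih h) (cfun_mono s y)
    · subst h
      exact cfun_mono s x

/-- the run-length sequence `(b_n)_{n≥1}` of `(d'_k)_{k≥1}` is
self-generating in Cloitre's sense: `b 1 = 1` and, for every `n ≥ 1`, the sum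
of the entries in the `n`'th run of `b` (positions `e2 (n-1)+1, …, e2 n`)
equals `2 * b n`. -/
theorem cloitre_b_selfGenerating
    (q : ℕ → ℕ) (hq : IsRegularPaperfolding q)
    (e : ℕ → ℕ) (he : IsRunEnds (dabs q) e)
    (b : ℕ → ℕ) (hb : ∀ n, 1 ≤ n → b n = e n - e (n - 1))
    (e2 : ℕ → ℕ) (he2 : IsRunEnds b e2) :
    b 1 = 1 ∧
      ∀ n, 1 ≤ n → (∑ i ∈ Finset.Icc (e2 (n - 1) + 1) (e2 n), b i) = 2 * b n := by
  obtain ⟨hq01, hq0, hdouble, hodd1, hodd3⟩ := hq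
  have hq1 : q 1 = 0 := by have := hodd1 0; norm_num at this; exact this
  have hq2 : q 2 = 0 := by have := hdouble 1 le_rfl; norm_num [hq1] at this; exact this
  have hq3 : q 3 = 1 := by have := hodd3 0; norm_num at this; exact this
  set s : ℕ → ℕ := dabs q with hs
  -- basic values of s
  have key : ∀ x, 2 ≤ x → s x = if q x = q (x - 1) then 0 else 1 := by
    intro x hx
    have h1 := hq01 x
    have h2 := hq01 (x - 1)
    simp only [hs, dabs, dseq, if_neg (show x ≠ 1 by omega)]
    split_ifs with h
    · rw [h]; simp
    · omega
  have hd1 : s 1 = 1 := by simp [hs, dabs, dseq]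
  have hd2 : s 2 = 0 := by rw [key 2 le_rfl]; norm_num [hq2, hq1]
  have svals : ∀ n, 1 ≤ n → s n = 0 ∨ s n = 1 := by
    intro n hn
    rcases eq_or_lt_of_le hn with h | h
    · right; rw [← h]; exact hd1
    · rw [key n (by omega)]; split_ifs <;> simp
  -- L2: within a pair (2n, 2n+1) the two values sum to 1
  have L2 : ∀ n, 1 ≤ n → s (2 * n) + s (2 * n + 1) = 1 := by
    intro n hn
    rcases Nat.even_or_odd n with ⟨k, hk⟩ | ⟨k, hk⟩
    · have hk' : n = 2 * k := by omega
      subst hk'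
      have hk1 : 1 ≤ k := by omega
      have e1 := key (4 * k) (by omega)
      rw [show 4 * k - 1 = 4 * (k - 1) + 3 by omega, hodd3] at e1
      have e2' := key (4 * k + 1) (by omega)
      rw [show 4 * k + 1 - 1 = 4 * k by omega, hodd1] at e2'
      rw [show 2 * (2 * k) = 4 * k by ring]
      rw [e1, e2']
      rcases hq01 (4 * k) with h | h <;> simp [h]
    · subst hk
      have e1 := key (4 * k + 2) (by omega)
      rw [show 4 * k + 2 - 1 = 4 * k + 1 by omega, hodd1] at e1
      have e2' := key (4 * k + 3) (by omega)
      rw [show 4 * k + 3 - 1 = 4 * k + 2 by omega, hodd3] at e2'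
      rw [show 2 * (2 * k + 1) = 4 * k + 2 by ring]
      rw [show 4 * k + 2 + 1 = 4 * k + 3 by ring]
      rw [e1, e2']
      rcases hq01 (4 * k + 2) with h | h <;> simp [h]
  -- L3: merge condition between pairs
  have L3 : ∀ n, 1 ≤ n → (s (2 * n + 1) = s (2 * n + 2) ↔ s (n + 1) = 0) := by
    intro n hn
    rcases Nat.even_or_odd n with ⟨k, hk⟩ | ⟨k, hk⟩
    · have hk' : n = 2 * k := by omega
      subst hk'
      have hk1 : 1 ≤ k := by omega
      have hq4k : q (4 * k) = q (2 * k) := by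
        have := hdouble (2 * k) (by omega)
        rw [show 2 * (2 * k) = 4 * k by ring] at this
        exact this
      have hq4k2 : q (4 * k + 2) = q (2 * k + 1) := by
        have := hdouble (2 * k + 1) (by omega)
        rw [show 2 * (2 * k + 1) = 4 * k + 2 by ring] at this
        exact this
      have e1 := key (4 * k + 1) (by omega)
      rw [show 4 * k + 1 - 1 = 4 * k by omega, hodd1, hq4k] at e1
      have e2' := key (4 * k + 2) (by omega)
      rw [show 4 * k + 2 - 1 = 4 * k + 1 by omega, hodd1, hq4k2] at e2'
      have e3 := key (2 * k + 1) (by omega)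
      rw [show 2 * k + 1 - 1 = 2 * k by omega] at e3
      rw [show 2 * (2 * k) + 1 = 4 * k + 1 by ring, show 2 * (2 * k) + 2 = 4 * k + 2 by ring]
      rw [e1, e2', e3]
      rcases hq01 (2 * k) with h | h <;> rcases hq01 (2 * k + 1) with h' | h' <;> simp [h, h']
    · subst hk
      have hq4k2 : q (4 * k + 2) = q (2 * k + 1) := by
        have := hdouble (2 * k + 1) (by omega)
        rw [show 2 * (2 * k + 1) = 4 * k + 2 by ring] at this
        exact this
      have hq4k4 : q (4 * k + 4) = q (2 * k + 2) := by
        have := hdouble (2 * k + 2) (by omega)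
        rw [show 2 * (2 * k + 2) = 4 * k + 4 by ring] at this
        exact this
      have e1 := key (4 * k + 3) (by omega)
      rw [show 4 * k + 3 - 1 = 4 * k + 2 by omega, hodd3, hq4k2] at e1
      have e2' := key (4 * k + 4) (by omega)
      rw [show 4 * k + 4 - 1 = 4 * k + 3 by omega, hodd3, hq4k4] at e2'
      have e3 := key (2 * k + 2) (by omega)
      rw [show 2 * k + 2 - 1 = 2 * k + 1 by omega] at e3
      rw [show 2 * (2 * k + 1) + 1 = 4 * k + 3 by ring, show 2 * (2 * k + 1) + 2 = 4 * k + 4 by ring]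
      rw [show 2 * k + 1 + 1 = 2 * k + 2 by ring]
      rw [e1, e2', e3]
      rcases hq01 (2 * k + 1) with h | h <;> rcases hq01 (2 * k + 2) with h' | h' <;> simp [h, h']
  -- initial run ends of s
  have he0 : e 0 = 0 := he.1
  have hee1 : e 1 = 1 := by
    have := runEnds_next he he0 (show 0 < 1 by omega)
      (fun i h1 h2 => absurd h2 (by omega)) (by rw [hd1, hd2]; omega)
    simpa using this
  have hd3 : s 3 = 1 := by
    have := L2 1 le_rfl
    norm_num at this
    omega
  have hee2 : e 2 = 2 := by
    have := runEnds_next he hee1 (show 1 < 2 by omega)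
      (fun i h1 h2 => absurd h2 (by omega)) (by rw [hd2]; rw [show (2:ℕ)+1 = 3 from rfl, hd3]; omega)
    simpa using this
  set C : ℕ → ℕ := cfun s with hC
  have hC1 : C 1 = 2 := cfun_one s
  have hCsucc : ∀ m, 1 ≤ m → C (m + 1) = C m + 1 + s (m + 1) := fun m hm => cfun_succ s m hm
  have hCmono : ∀ m, C m < C (m + 1) := cfun_mono s
  have hCstrict : ∀ x y : ℕ, x < y → C x < C y := cfun_strict s
  -- blk: e (C m) = 2m
  have blk : ∀ m, 1 ≤ m → e (C m) = 2 * m := by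
    intro m hm
    induction m, hm using Nat.le_induction with
    | base => rw [hC1, hee2]
    | succ m hm ih =>
      have hL2' : s (2 * m + 2) + s (2 * m + 2 + 1) = 1 := by
        have := L2 (m + 1) (by omega)
        rw [show 2 * (m + 1) = 2 * m + 2 by ring] at this
        exact this
      rcases svals (m + 1) (by omega) with h0 | h1
      · have hmerge : s (2 * m + 1) = s (2 * m + 2) := (L3 m hm).mpr h0
        have step : e (C m + 1) = 2 * m + 2 := by
          apply runEnds_next he ih (by omega)
          · intro i hi1 hi2
            have : i = 2 * m + 1 := by omega
            subst this
            exact hmerge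
          · omega
        rw [hCsucc m hm, h0]
        rw [show C m + 1 + 0 = C m + 1 by omega, step]
        ring
      · have hnomerge : s (2 * m + 1) ≠ s (2 * m + 1 + 1) := by
          intro heq
          have : s (2 * m + 1) = s (2 * m + 2) := heq
          have := (L3 m hm).mp this
          omega
        have step1 : e (C m + 1) = 2 * m + 1 :=
          runEnds_next he ih (by omega) (fun i hi1 hi2 => absurd hi2 (by omega)) hnomerge
        have step2 : e (C m + 1 + 1) = 2 * m + 2 :=
          runEnds_next he step1 (by omega) (fun i hi1 hi2 => absurd hi2 (by omega)) (by omega)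
        rw [hCsucc m hm, h1]
        rw [show C m + 1 + 1 = C m + 1 + 1 from rfl] at step2
        rw [show e (C m + 1 + 1) = 2 * m + 2 from step2]
        ring
  -- block values of b
  have bval : ∀ m, 1 ≤ m →
      (s (m + 1) = 0 → C (m + 1) = C m + 1 ∧ b (C m + 1) = 2) ∧
      (s (m + 1) = 1 → C (m + 1) = C m + 2 ∧ b (C m + 1) = 1 ∧ b (C m + 2) = 1) := by
    intro m hm
    have h1 := blk m hm
    have h2 := blk (m + 1) (by omega)
    constructor
    · intro h0
      have hc : C (m + 1) = C m + 1 := by rw [hCsucc m hm, h0]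
      refine ⟨hc, ?_⟩
      have hb1 := hb (C m + 1) (by omega)
      rw [Nat.add_sub_cancel] at hb1
      rw [hb1, ← hc, h2, h1]
      omega
    · intro hh
      have hc : C (m + 1) = C m + 2 := by rw [hCsucc m hm, hh]
      have hnomerge : s (2 * m + 1) ≠ s (2 * m + 1 + 1) := by
        intro heq
        have : s (2 * m + 1) = s (2 * m + 2) := heq
        have := (L3 m hm).mp this
        omega
      have step1 : e (C m + 1) = 2 * m + 1 :=
        runEnds_next he h1 (by omega) (fun i hi1 hi2 => absurd hi2 (by omega)) hnomerge
      refine ⟨hc, ?_, ?_⟩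
      · have hb1 := hb (C m + 1) (by omega)
        rw [Nat.add_sub_cancel] at hb1
        rw [hb1, step1, h1]
        omega
      · have hb2 := hb (C m + 2) (by omega)
        rw [show C m + 2 - 1 = C m + 1 by omega] at hb2
        rw [hb2, ← hc, h2, step1]
        omega
  have hb1v : b 1 = 1 := by
    have h := hb 1 le_rfl
    norm_num [hee1, he0] at h
    exact h
  have hb2v : b 2 = 1 := by
    have h := hb 2 (by omega)
    norm_num [hee2, hee1] at h
    exact h
  -- partial sums of b up to block boundaries
  have hsum : ∀ m, 1 ≤ m → (∑ i ∈ Finset.Ioc 0 (C m), b i) = 2 * m := by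
    intro m hm
    induction m, hm using Nat.le_induction with
    | base =>
      rw [hC1]
      rw [show Finset.Ioc (0:ℕ) 2 = {1, 2} from by decide]
      rw [Finset.sum_insert (by decide), Finset.sum_singleton, hb1v, hb2v]
    | succ m hm ih =>
      rcases svals (m + 1) (by omega) with h0 | h1
      · obtain ⟨hc, hbv⟩ := (bval m (by omega)).1 h0
        rw [hc, Finset.sum_Ioc_succ_top (by omega) b, ih, hbv]
        ring
      · obtain ⟨hc, hbv1, hbv2⟩ := (bval m (by omega)).2 h1
        rw [hc]
        rw [show C m + 2 = C m + 1 + 1 from rfl]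
        rw [Finset.sum_Ioc_succ_top (by omega) b, Finset.sum_Ioc_succ_top (by omega) b, ih]
        rw [show C m + 1 + 1 = C m + 2 from rfl, hbv1, hbv2]
        ring
  -- e2 n = C (e n)
  have hE2 : ∀ n, 1 ≤ n → e2 n = C (e n) := by
    intro n hn
    induction n, hn using Nat.le_induction with
    | base =>
      rw [hee1, hC1]
      apply runEnds_next he2 he2.1 (by omega)
      · intro i hi1 hi2
        have : i = 1 := by omega
        subst this
        rw [hb1v]
        rw [show (1:ℕ) + 1 = 2 from rfl, hb2v]
      · have h3 := ((bval 1 le_rfl).1 hd2).2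
        rw [hC1] at h3
        rw [hb2v, show (2:ℕ) + 1 = 3 from rfl]
        rw [show b 3 = 2 from h3]
        omega
    | succ n hn ih =>
      have ha1 : 1 ≤ e n := by
        have := he.2.1 (show 0 < n by omega)
        omega
      have haa : e n < e (n + 1) := he.2.1 (by omega)
      have ha1' : 1 ≤ e (n + 1) := by omega
      have hv := svals (e (n + 1)) (by omega)
      have hrun' : ∀ i, e n < i → i ≤ e (n + 1) → s i = s (e (n + 1)) := by
        intro i hi1 hi2
        apply he.2.2.1 (n + 1) (by omega) i _ hi2
        simpa using hi1
      have hne' : s (e (n + 1)) ≠ s (e (n + 1) + 1) := he.2.2.2 (n + 1) (by omega)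
      have hbconst : ∀ k, C (e n) < k → k ≤ C (e (n + 1)) → b k = 2 - s (e (n + 1)) := by
        intro k h1 h2
        obtain ⟨m, hm1, hm2, hm3, hm4⟩ :=
          exists_block C hCmono (e (n + 1)) (e n) k (le_of_lt haa) h1 h2
        have hm0 : 1 ≤ m := le_trans ha1 hm1
        have hsm : s (m + 1) = s (e (n + 1)) := hrun' (m + 1) (by omega) (by omega)
        rcases hv with h | h
        · obtain ⟨hc, hbv⟩ := (bval m hm0).1 (by rw [hsm, h])
          have hk : k = C m + 1 := by omega
          rw [hk, hbv]
          omega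
        · obtain ⟨hc, hbv1, hbv2⟩ := (bval m hm0).2 (by rw [hsm, h])
          rcases (show k = C m + 1 ∨ k = C m + 2 by omega) with hk | hk
          · rw [hk, hbv1]; omega
          · rw [hk, hbv2]; omega
      have hCaa : C (e n) < C (e (n + 1)) := hCstrict _ _ haa
      have hlast : b (C (e (n + 1))) = 2 - s (e (n + 1)) := hbconst _ hCaa le_rfl
      have hnextval : b (C (e (n + 1)) + 1) = 1 + s (e (n + 1)) := by
        have hv1 := svals (e (n + 1) + 1) (by omega)
        rcases hv with h | h
        · have hs1 : s (e (n + 1) + 1) = 1 := by omega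
          obtain ⟨hc, hbv1, hbv2⟩ := (bval (e (n + 1)) (by omega)).2 hs1
          rw [hbv1, h]
        · have hs0 : s (e (n + 1) + 1) = 0 := by omega
          obtain ⟨hc, hbv⟩ := (bval (e (n + 1)) (by omega)).1 hs0
          rw [hbv, h]
      apply runEnds_next he2 ih hCaa
      · intro i hi1 hi2
        have v1 := hbconst i hi1 (by omega)
        have v2 := hbconst (i + 1) (by omega) (by omega)
        rw [v1, v2]
      · rw [hlast, hnextval]
        rcases hv with h | h <;> rw [h] <;> omega
  refine ⟨hb1v, ?_⟩
  intro n hn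
  rcases eq_or_lt_of_le hn with h | h
  · subst h
    rw [show (1:ℕ) - 1 = 0 from rfl, he2.1]
    rw [hE2 1 le_rfl, hee1, hC1]
    rw [show (0:ℕ) + 1 = 1 from rfl]
    rw [show Finset.Icc (1:ℕ) 2 = {1, 2} from by decide]
    rw [Finset.sum_insert (by decide), Finset.sum_singleton, hb1v, hb2v]
  · have hn2 : 2 ≤ n := h
    have hn1 : 1 ≤ n - 1 := by omega
    have he1pos : 1 ≤ e (n - 1) := by
      have := he.2.1 (show 0 < n - 1 by omega)
      omega
    have hen : e (n - 1) < e n := he.2.1 (by omega)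
    have hA := hsum (e (n - 1)) he1pos
    have hB := hsum (e n) (by omega)
    have hE2a := hE2 (n - 1) hn1
    have hE2b := hE2 n (by omega)
    have hCC : C (e (n - 1)) ≤ C (e n) := le_of_lt (hCstrict _ _ hen)
    have hsplit := Finset.sum_Ioc_consecutive b (Nat.zero_le (e2 (n - 1)))
      (show e2 (n - 1) ≤ e2 n by rw [hE2a, hE2b]; exact hCC)
    rw [hE2a, hE2b] at hsplit
    rw [hE2a, hE2b, Finset.Icc_add_one_left_eq_Ioc]
    have hbn : b n = e n - e (n - 1) := hb n (by omega)
    omega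
end

section
/- There is exactly one sequence (a_n)_{n≥1} taking values in {1, 2} with a_1 = 1 such that, for every n ≥ 1, the sum of the entries appearing in the n'th run of (a_k)_{k≥1} equals 2·a_n. -/
/-- Cloitre's self-generating property for a sequence `a` taking values in
`{1, 2}` (indexed from 1; `a 0` is irrelevant), with `e` enumerating the
ending positions of the runs of `a`: `a 1 = 1` and, for every `n ≥ 1`, the
sum of the entries appearing in the `n`'th run of `a` equals `2 * a n`. -/
def CloitreSelfGen (a : ℕ → ℕ) (e : ℕ → ℕ) : Prop :=
  (∀ n, 1 ≤ n → a n = 1 ∨ a n = 2) ∧ a 1 = 1 ∧ IsRunEnds a e ∧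
    (∀ n, 1 ≤ n → (∑ i ∈ Finset.Icc (e (n - 1) + 1) (e n), a i) = 2 * a n)


/-- value of the `n`-th run -/
def cv (n : ℕ) : ℕ := if n % 2 = 1 then 1 else 2

/-- length of the `n`-th run if `a n = x` -/
def cl (x n : ℕ) : ℕ := if n % 2 = 1 then 2 * x else x

/-- state after `n` runs: (end position, values so far, junk beyond) -/
def st : ℕ → ℕ × (ℕ → ℕ)
  | 0 => (0, fun _ => 1)
  | n+1 =>
    let p := st n
    let a := if n = 0 then 1 else p.2 (n+1)
    (p.1 + cl a (n+1), fun i => if i ≤ p.1 then p.2 i else cv (n+1))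

def ce (n : ℕ) : ℕ := (st n).1
def ca (i : ℕ) : ℕ := (st i).2 i

lemma cv_mem (n : ℕ) : cv n = 1 ∨ cv n = 2 := by unfold cv; split_ifs <;> simp

lemma cv_succ (n : ℕ) : (cv n = 1 ∧ cv (n+1) = 2) ∨ (cv n = 2 ∧ cv (n+1) = 1) := by
  unfold cv; split_ifs <;> omega

lemma cv_ne (n : ℕ) : cv n ≠ cv (n+1) := by rcases cv_succ n with ⟨h1,h2⟩|⟨h1,h2⟩ <;> omega

lemma st_snd_succ (n i : ℕ) :
    (st (n+1)).2 i = if i ≤ ce n then (st n).2 i else cv (n+1) := rfl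

lemma st2_mem (n i : ℕ) : (st n).2 i = 1 ∨ (st n).2 i = 2 := by
  induction n generalizing i with
  | zero => left; rfl
  | succ m ih =>
    rw [st_snd_succ]
    split_ifs
    · exact ih i
    · exact cv_mem (m+1)

lemma ca_mem (i : ℕ) : ca i = 1 ∨ ca i = 2 := st2_mem i i

lemma cl_pos {x : ℕ} (hx : 1 ≤ x) (n : ℕ) : 1 ≤ cl x n := by
  unfold cl; split_ifs <;> omega

lemma ce_zero : ce 0 = 0 := rfl

lemma ce_succ (n : ℕ) :
    ce (n+1) = ce n + cl (if n = 0 then 1 else (st n).2 (n+1)) (n+1) := rfl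

lemma ce_lt (n : ℕ) : ce n < ce (n+1) := by
  rw [ce_succ]
  have : 1 ≤ (if n = 0 then 1 else (st n).2 (n+1)) := by
    split_ifs with h
    · omega
    · rcases st2_mem n (n+1) with h|h <;> omega
  have := cl_pos this (n+1)
  omega

lemma ce_strict : StrictMono ce := strictMono_nat_of_lt_succ ce_lt

lemma ce_ge (n : ℕ) (hn : 1 ≤ n) : n + 1 ≤ ce n := by
  induction n with
  | zero => omega
  | succ m ih =>
    rcases Nat.eq_zero_or_pos m with h|h
    · subst h
      show 2 ≤ ce 1
      rw [ce_succ]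
      simp [ce_zero, cl]
    · have := ce_lt m
      have := ih h
      omega

lemma st_stable {m n : ℕ} (hmn : m ≤ n) {i : ℕ} (hi : i ≤ ce m) :
    (st n).2 i = (st m).2 i := by
  induction n, hmn using Nat.le_induction with
  | base => rfl
  | succ k hk ih =>
    rw [st_snd_succ, if_pos (hi.trans (ce_strict.monotone hk)), ih]

lemma ca_eq {n i : ℕ} (h1 : 1 ≤ i) (h2 : i ≤ ce n) : ca i = (st n).2 i := by
  have hi : i ≤ ce i := by have := ce_ge i h1; omega
  have e1 := st_stable (le_max_left i n) hi
  have e2 := st_stable (le_max_right i n) h2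
  unfold ca
  rw [← e1, e2]

lemma run_val {n i : ℕ} (hn : 1 ≤ n) (hl : ce (n-1) < i) (hr : i ≤ ce n) :
    ca i = cv n := by
  obtain ⟨m, rfl⟩ : ∃ m, n = m + 1 := ⟨n - 1, by omega⟩
  have hm : ce m < i := hl
  have h1 : 1 ≤ i := by omega
  rw [ca_eq h1 hr, st_snd_succ, if_neg (by omega)]

lemma ca_one : ca 1 = 1 := by
  have h := run_val (n := 1) (i := 1) le_rfl (by simp [ce_zero]) (by have := ce_ge 1 le_rfl; omega)
  simpa [cv] using h

lemma ca_def (n : ℕ) : (if n = 0 then 1 else (st n).2 (n+1)) = ca (n+1) := by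
  rcases Nat.eq_zero_or_pos n with h|h
  · subst h; simp [ca_one]
  · rw [if_neg (by omega), ← ca_eq (by omega) (by have := ce_ge n h; omega)]

lemma ce_succ' (n : ℕ) : ce (n+1) = ce n + cl (ca (n+1)) (n+1) := by
  rw [ce_succ, ca_def]

lemma ce_diff (n : ℕ) (hn : 1 ≤ n) : ce n = ce (n-1) + cl (ca n) n := by
  obtain ⟨m, rfl⟩ : ∃ m, n = m + 1 := ⟨n - 1, by omega⟩
  exact ce_succ' m

lemma cl_mul_cv (x n : ℕ) : cl x n * cv n = 2 * x := by
  unfold cl cv; split_ifs <;> ring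

lemma sum_run (n : ℕ) (hn : 1 ≤ n) :
    (∑ i ∈ Finset.Icc (ce (n-1) + 1) (ce n), ca i) = 2 * ca n := by
  have hlt : ce (n-1) < ce n := ce_strict (by omega)
  have hsum : (∑ i ∈ Finset.Icc (ce (n-1) + 1) (ce n), ca i)
      = (∑ i ∈ Finset.Icc (ce (n-1) + 1) (ce n), cv n) := by
    refine Finset.sum_congr rfl fun i hi => ?_
    rw [Finset.mem_Icc] at hi
    exact run_val hn (by omega) hi.2
  rw [hsum, Finset.sum_const, Nat.card_Icc, smul_eq_mul]
  have hd := ce_diff n hn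
  have : ce n + 1 - (ce (n-1) + 1) = cl (ca n) n := by omega
  rw [this, cl_mul_cv]

lemma ca_end (n : ℕ) (hn : 1 ≤ n) : ca (ce n) = cv n :=
  run_val hn (ce_strict (by omega)) le_rfl

lemma ca_end_succ (n : ℕ) : ca (ce n + 1) = cv (n+1) := by
  have := ce_lt n
  exact run_val (n := n+1) (by omega) (by simp) (by omega)

lemma exists_part : CloitreSelfGen ca ce := by
  refine ⟨fun n _ => ca_mem n, ca_one, ⟨ce_zero, ce_strict, ?_, ?_⟩, sum_run⟩
  · intro n hn i hl hr
    rw [run_val hn hl hr, ca_end n hn]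
  · intro n hn
    rw [ca_end n hn, ca_end_succ n]
    exact cv_ne n

section Unique

variable {a e : ℕ → ℕ}

lemma sg_runval (h : CloitreSelfGen a e) : ∀ n, 1 ≤ n → a (e n) = cv n := by
  obtain ⟨hmem, h1, ⟨he0, hsm, hconst, hne⟩, hsum⟩ := h
  intro n hn
  induction n with
  | zero => omega
  | succ m ih =>
    rcases Nat.eq_zero_or_pos m with hm|hm
    · subst hm
      have he1 : 1 ≤ e 1 := by have := hsm (show 0 < 1 by omega); omega
      have hc := hconst 1 le_rfl 1 (by simp [he0]) he1
      rw [← hc, h1]; simp [cv]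
    · have ihm := ih hm
      have hlt : e m < e (m+1) := hsm (Nat.lt_succ_self m)
      have hcon := hconst (m+1) (by omega) (e m + 1) (by simp) (by omega)
      have hne' := hne m hm
      have hv' := hmem (e m + 1) (by omega)
      rw [← hcon]
      rcases cv_succ m with ⟨c1,c2⟩|⟨c1,c2⟩ <;> rcases hv' with hv'|hv' <;> omega

lemma sg_len (h : CloitreSelfGen a e) : ∀ n, 1 ≤ n → e n = e (n-1) + cl (a n) n := by
  obtain ⟨hmem, h1, ⟨he0, hsm, hconst, hne⟩, hsum⟩ := h
  intro n hn
  have hrv := sg_runval ⟨hmem, h1, ⟨he0, hsm, hconst, hne⟩, hsum⟩ n hn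
  have hlt : e (n-1) < e n := hsm (by omega)
  have hs := hsum n hn
  have hcc : ∀ i ∈ Finset.Icc (e (n-1) + 1) (e n), a i = cv n := by
    intro i hi; rw [Finset.mem_Icc] at hi
    rw [hconst n hn i (by omega) hi.2, hrv]
  rw [Finset.sum_congr rfl hcc, Finset.sum_const, Nat.card_Icc, smul_eq_mul] at hs
  unfold cv at hs
  unfold cl
  split_ifs at hs ⊢ <;> omega

lemma sg_ge (h : CloitreSelfGen a e) : ∀ n, 1 ≤ n → n + 1 ≤ e n := by
  intro n hn
  induction n with
  | zero => omega
  | succ m ih =>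
    rcases Nat.eq_zero_or_pos m with hm|hm
    · subst hm
      have hln := sg_len h 1 le_rfl
      have h1 := h.2.1
      have he0 := h.2.2.1.1
      simp [he0, h1, cl] at hln
      have hx : e (0+1) = e 1 := rfl
      omega
    · have := h.2.2.1.2.1 (show m < m + 1 by omega)
      have := ih hm
      omega

end Unique

/-- there is exactly one sequence `(a_n)_{n≥1}` over `{1,2}`
with `a 1 = 1` whose `n`'th run sums to `2 * a n` for every `n ≥ 1`. -/
theorem cloitre_existsUnique :
    (∃ a e, CloitreSelfGen a e) ∧
      (∀ a e a' e', CloitreSelfGen a e → CloitreSelfGen a' e' →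
        ∀ n, 1 ≤ n → a n = a' n) := by
  constructor
  · exact ⟨ca, ce, exists_part⟩
  · intro a e a' e' h h' n hn
    have key : ∀ m, e m = e' m ∧ ∀ i, 1 ≤ i → i ≤ e m → a i = a' i := by
      intro m
      induction m with
      | zero =>
        rw [h.2.2.1.1, h'.2.2.1.1]
        exact ⟨rfl, fun i h1 h2 => absurd h2 (by omega)⟩
      | succ m ih =>
        have ha : a (m+1) = a' (m+1) := by
          rcases Nat.eq_zero_or_pos m with hm|hm
          · subst hm; rw [h.2.1, h'.2.1]
          · exact ih.2 (m+1) (by omega) (sg_ge h m hm)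
        have hl := sg_len h (m+1) (by omega)
        have hl' := sg_len h' (m+1) (by omega)
        simp only [Nat.add_sub_cancel] at hl hl'
        have he : e (m+1) = e' (m+1) := by rw [hl, hl', ha, ih.1]
        refine ⟨he, fun i h1 h2 => ?_⟩
        rcases le_or_gt i (e m) with hc|hc
        · exact ih.2 i h1 hc
        · have r1 := h.2.2.1.2.2.1 (m+1) (by omega) i (by simpa using hc) h2
          have r2 := h'.2.2.1.2.2.1 (m+1) (by omega) i
            (by simp only [Nat.add_sub_cancel, ← ih.1]; exact hc) (he ▸ h2)
          rw [r1, r2, sg_runval h (m+1) (by omega), sg_runval h' (m+1) (by omega)]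
    have := sg_ge h n hn
    exact (key n).2 n hn (by omega)
end

section
/- Cloitre's sequence (a_n)_{n≥1} — the unique sequence over {1,2} with a_1 = 1 such that the sum of the entries in the n'th run of (a_k) equals 2·a_n for all n ≥ 1 — coincides with the run-length sequence of (d'_k)_{k≥1}: a_n = b_n for all n ≥ 1. -/
namespace CloitreProofAux

/-! ### Generic run-ends step lemmas -/

theorem runStep1 {α : Type*} {s : ℕ → α} {e : ℕ → ℕ} (he : IsRunEnds s e)
    (n p : ℕ) (hp : e n = p) (hne : s (p+1) ≠ s (p+2)) : e (n+1) = p + 1 := by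
  obtain ⟨-, hsm, hconst, -⟩ := he
  have h1 : p + 1 ≤ e (n+1) := by have := hsm (show n < n+1 by omega); omega
  by_contra h
  have h2 : p + 2 ≤ e (n+1) := by omega
  have c := hconst (n+1) (by omega)
  simp only [Nat.add_sub_cancel, hp] at c
  have e1 : s (p+1) = s (e (n+1)) := c (p+1) (by omega) (by omega)
  have e2 : s (p+2) = s (e (n+1)) := c (p+2) (by omega) h2
  exact hne (e1.trans e2.symm)

theorem runStep2 {α : Type*} {s : ℕ → α} {e : ℕ → ℕ} (he : IsRunEnds s e)
    (n p : ℕ) (hp : e n = p) (heq : s (p+1) = s (p+2)) (hne : s (p+2) ≠ s (p+3)) :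
    e (n+1) = p + 2 := by
  obtain ⟨-, hsm, hconst, hend⟩ := he
  have h1 : p + 1 ≤ e (n+1) := by have := hsm (show n < n+1 by omega); omega
  have c := hconst (n+1) (by omega)
  simp only [Nat.add_sub_cancel, hp] at c
  rcases eq_or_lt_of_le h1 with h | h
  · exfalso
    have := hend (n+1) (by omega)
    rw [← h] at this
    exact this heq
  · by_contra hne2
    have h3 : p + 3 ≤ e (n+1) := by omega
    have e2 : s (p+2) = s (e (n+1)) := c (p+2) (by omega) (by omega)
    have e3 : s (p+3) = s (e (n+1)) := c (p+3) (by omega) h3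
    exact hne (e2.trans e3.symm)

/-! ### Paperfolding facts -/

variable {q : ℕ → ℕ}

theorem q_odd (hq : IsRegularPaperfolding q) (j : ℕ) : q (2*j+1) = j % 2 := by
  rcases Nat.even_or_odd j with ⟨t, ht⟩ | ⟨t, ht⟩
  · have h1 : 2*j+1 = 4*t+1 := by omega
    rw [h1, hq.2.2.2.1 t]; omega
  · have h1 : 2*j+1 = 4*t+3 := by omega
    rw [h1, hq.2.2.2.2 t]; omega

theorem dabs_one : dabs q 1 = 1 := by simp [dabs, dseq]

theorem dabs_le (hq : IsRegularPaperfolding q) (k : ℕ) : dabs q k ≤ 1 := by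
  unfold dabs dseq
  by_cases h : k = 1
  · simp [h]
  · rw [if_neg h]
    rcases hq.1 k with h1 | h1 <;> rcases hq.1 (k-1) with h2 | h2 <;>
      rw [h1, h2] <;> decide

theorem dabs_two (hq : IsRegularPaperfolding q) : dabs q 2 = 0 := by
  have h1 : q 2 = q 1 := by have := hq.2.2.1 1 le_rfl; simpa using this
  unfold dabs dseq
  norm_num [h1]

theorem dsum (hq : IsRegularPaperfolding q) (j : ℕ) (hj : 1 ≤ j) :
    dabs q (2*j) + dabs q (2*j+1) = 1 := by
  have hq2j : q (2*j) = q j := hq.2.2.1 j hj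
  have h1 : q (2*j+1) = j % 2 := q_odd hq j
  have h2 : q (2*j-1) = (j-1) % 2 := by
    have := q_odd hq (j-1)
    rw [show 2*(j-1)+1 = 2*j-1 from by omega] at this
    exact this
  unfold dabs dseq
  rw [if_neg (by omega), if_neg (by omega)]
  rw [show 2*j+1-1 = 2*j from by omega]
  rw [hq2j, h1, h2]
  rcases hq.1 j with h | h <;>
    rcases (show j % 2 = 0 ∧ (j-1) % 2 = 1 ∨ j % 2 = 1 ∧ (j-1) % 2 = 0 from by omega)
      with ⟨hm1, hm2⟩ | ⟨hm1, hm2⟩ <;>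
    rw [h, hm1, hm2] <;> decide

theorem dglue (hq : IsRegularPaperfolding q) (j : ℕ) (hj : 1 ≤ j) :
    (dabs q (2*j+1) = dabs q (2*j+2)) ↔ dabs q (j+1) = 0 := by
  have hq2j : q (2*j) = q j := hq.2.2.1 j hj
  have hq2j2 : q (2*j+2) = q (j+1) := by
    have := hq.2.2.1 (j+1) (by omega)
    rw [show 2*(j+1) = 2*j+2 from by omega] at this
    exact this
  have h1 : q (2*j+1) = j % 2 := q_odd hq j
  unfold dabs dseq
  rw [if_neg (by omega), if_neg (by omega), if_neg (by omega)]
  rw [show 2*j+1-1 = 2*j from by omega, show 2*j+2-1 = 2*j+1 from by omega,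
    show j+1-1 = j from by omega]
  rw [hq2j, hq2j2, h1]
  rcases hq.1 j with h | h <;> rcases hq.1 (j+1) with h' | h' <;>
    rcases Nat.mod_two_eq_zero_or_one j with hm | hm <;>
    rw [h, h', hm] <;> decide

/-! ### The counting functions -/

/-- number of ones of `d'` among positions `1..m` -/
def Ones (q : ℕ → ℕ) (m : ℕ) : ℕ := ∑ i ∈ Finset.Ioc 0 m, dabs q i

def F (q : ℕ → ℕ) (m : ℕ) : ℕ := m + Ones q m

theorem F_zero : F q 0 = 0 := by simp [F, Ones]

theorem F_succ (m : ℕ) : F q (m+1) = F q m + 1 + dabs q (m+1) := by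
  unfold F Ones
  rw [Finset.sum_Ioc_succ_top (Nat.zero_le m)]
  omega

theorem F_strictMono : StrictMono (F q) := by
  apply strictMono_nat_of_lt_succ
  intro n
  rw [F_succ]
  omega

theorem F_ge (m : ℕ) : m ≤ F q m := Nat.le_add_right _ _

theorem cover (j : ℕ) (hj : 1 ≤ j) :
    ∃ m, 1 ≤ m ∧ F q (m-1) < j ∧ j ≤ F q m := by
  have hex : ∃ m, j ≤ F q m := ⟨j, F_ge j⟩
  classical
  refine ⟨Nat.find hex, ?_, ?_, Nat.find_spec hex⟩
  · rcases Nat.eq_zero_or_pos (Nat.find hex) with h | h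
    · exfalso
      have := Nat.find_spec hex
      rw [h, F_zero] at this; omega
    · exact h
  · have h1 : 1 ≤ Nat.find hex := by
      rcases Nat.eq_zero_or_pos (Nat.find hex) with h | h
      · exfalso; have := Nat.find_spec hex; rw [h, F_zero] at this; omega
      · exact h
    have := Nat.find_min hex (m := Nat.find hex - 1) (by omega)
    omega

end CloitreProofAux

namespace CloitreProofAux

variable {q : ℕ → ℕ} {e b : ℕ → ℕ}

/-- Main structure lemma: `e (F m) = 2m` and the run-length sequence `b`
equals `2 - d'_m` on the block of indices `(F (m-1), F m]`. -/
theorem main_struct (hq : IsRegularPaperfolding q) (he : IsRunEnds (dabs q) e)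
    (hb : ∀ n, 1 ≤ n → b n = e n - e (n - 1)) :
    ∀ m, 1 ≤ m → e (F q m) = 2*m ∧
      ∀ j, F q (m-1) < j → j ≤ F q m → b j = 2 - dabs q m := by
  intro m hm
  induction m, hm using Nat.le_induction with
  | base =>
    have hD1 : dabs q 1 = 1 := dabs_one
    have hD2 : dabs q 2 = 0 := dabs_two hq
    have hF1 : F q 1 = 2 := by rw [show (1:ℕ) = 0 + 1 from rfl, F_succ, F_zero, hD1]
    have he1 : e 1 = 1 := by
      have := runStep1 he 0 0 he.1 (by rw [show (0:ℕ)+1 = 1 from rfl, show (0:ℕ)+2 = 2 from rfl, hD1, hD2]; omega)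
      simpa using this
    have hs1 := dsum hq 1 le_rfl
    have he2 : e 2 = 2 := by
      have := runStep1 he 1 1 he1 (by
        show dabs q 2 ≠ dabs q 3
        have h3 : 2*1+1 = 3 := by omega
        rw [show 2*1 = 2 from rfl, h3] at hs1
        omega)
      simpa using this
    refine ⟨by rw [hF1, he2], ?_⟩
    intro j h1 h2
    rw [show (1:ℕ)-1 = 0 from rfl, F_zero] at h1
    rw [hF1] at h2
    have hb1 : b 1 = 1 := by rw [hb 1 le_rfl, he1, he.1]
    have hb2 : b 2 = 1 := by rw [hb 2 (by omega), show (2:ℕ)-1 = 1 from rfl, he2, he1]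
    interval_cases j
    · rw [hb1, hD1]
    · rw [hb2, hD1]
  | succ m hm ih =>
    obtain ⟨hem, -⟩ := ih
    have hDle : dabs q (m+1) ≤ 1 := dabs_le hq (m+1)
    have hs : dabs q (2*m+2) + dabs q (2*m+3) = 1 := by
      have := dsum hq (m+1) (by omega)
      rw [show 2*(m+1) = 2*m+2 from by omega, show 2*m+2+1 = 2*m+3 from by omega] at this
      exact this
    have hglue : (dabs q (2*m+1) = dabs q (2*m+2)) ↔ dabs q (m+1) = 0 := dglue hq m hm
    have hF : F q (m+1) = F q m + 1 + dabs q (m+1) := F_succ m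
    have hFm1 : 1 ≤ F q m := le_trans hm (F_ge m)
    rcases (show dabs q (m+1) = 0 ∨ dabs q (m+1) = 1 from by omega) with hD | hD
    · -- glued: one run of length 2
      have heq : dabs q (2*m+1) = dabs q (2*m+2) := hglue.mpr hD
      have hne : dabs q (2*m+2) ≠ dabs q (2*m+3) := by omega
      have he' : e (F q m + 1) = 2*m + 2 := by
        have := runStep2 he (F q m) (2*m) hem
          (by rw [show 2*m+1 = 2*m+1 from rfl]; exact heq) hne
        exact this
      have hFs : F q (m+1) = F q m + 1 := by omega
      refine ⟨by rw [hFs, he']; omega, ?_⟩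
      intro j h1 h2
      rw [show m+1-1 = m from by omega] at h1
      rw [hFs] at h2
      have hj : j = F q m + 1 := by omega
      subst hj
      rw [hb _ (by omega), Nat.add_sub_cancel, he', hem]; omega
    · -- two runs of length 1
      have hne1 : dabs q (2*m+1) ≠ dabs q (2*m+2) := by
        intro h; have := hglue.mp h; omega
      have hne2 : dabs q (2*m+2) ≠ dabs q (2*m+3) := by omega
      have he1 : e (F q m + 1) = 2*m + 1 := runStep1 he (F q m) (2*m) hem hne1
      have he2 : e (F q m + 2) = 2*m + 2 := by
        have := runStep1 he (F q m + 1) (2*m+1) he1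
          (by rw [show 2*m+1+1 = 2*m+2 from by omega, show 2*m+1+2 = 2*m+3 from by omega]; exact hne2)
        rw [show F q m + 1 + 1 = F q m + 2 from by omega] at this
        omega
      have hFs : F q (m+1) = F q m + 2 := by omega
      refine ⟨by rw [hFs, he2]; omega, ?_⟩
      intro j h1 h2
      rw [show m+1-1 = m from by omega] at h1
      rw [hFs] at h2
      rcases (show j = F q m + 1 ∨ j = F q m + 2 from by omega) with hj | hj <;> subst hj
      · rw [hb _ (by omega), Nat.add_sub_cancel, he1, hem]; omega
      · rw [hb _ (by omega), show F q m + 2 - 1 = F q m + 1 from by omega, he1, he2]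
        omega

end CloitreProofAux

namespace CloitreProofAux

variable {q : ℕ → ℕ} {e b : ℕ → ℕ}

/-- Constancy of `b` along the runs corresponding to runs of `d'`. -/
theorem b_run_const (hq : IsRegularPaperfolding q) (he : IsRunEnds (dabs q) e)
    (hb : ∀ n, 1 ≤ n → b n = e n - e (n - 1)) (n : ℕ) (hn : 1 ≤ n) :
    ∀ i, F q (e (n-1)) < i → i ≤ F q (e n) → b i = 2 - dabs q (e n) := by
  intro i h1 h2
  have hi1 : 1 ≤ i := by omega
  obtain ⟨m, hm1, hm2, hm3⟩ := cover (q := q) i hi1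
  have hsm := he.2.1
  have hlow : e (n-1) < m := by
    by_contra h
    have : F q m ≤ F q (e (n-1)) := (F_strictMono (q := q)).monotone (by omega)
    omega
  have hhigh : m ≤ e n := by
    by_contra h
    have : F q (e n) ≤ F q (m-1) := (F_strictMono (q := q)).monotone (by omega)
    omega
  have hDm : dabs q m = dabs q (e n) := he.2.2.1 n hn m hlow hhigh
  have := (main_struct hq he hb m hm1).2 i hm2 hm3
  rw [this, hDm]

/-- `b`, with run-ends `F ∘ e`, satisfies Cloitre's self-generating property. -/
theorem b_cloitre (hq : IsRegularPaperfolding q) (he : IsRunEnds (dabs q) e)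
    (hb : ∀ n, 1 ≤ n → b n = e n - e (n - 1)) :
    CloitreSelfGen b (fun n => F q (e n)) := by
  have hsm := he.2.1
  have hen : ∀ n, n ≤ e n := fun n => hsm.le_apply
  have hself : ∀ n, 1 ≤ n → b (F q (e n)) = 2 - dabs q (e n) := by
    intro n hn
    apply b_run_const hq he hb n hn
    · exact F_strictMono (q := q) (hsm (by omega : n - 1 < n))
    · exact le_rfl
  refine ⟨?_, ?_, ⟨?_, ?_, ?_, ?_⟩, ?_⟩
  · -- values in {1,2}
    intro n hn
    obtain ⟨m, hm1, hm2, hm3⟩ := cover (q := q) n hn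
    have := (main_struct hq he hb m hm1).2 n hm2 hm3
    have hle := dabs_le hq m
    omega
  · -- b 1 = 1
    have h := (main_struct hq he hb 1 le_rfl).2 1
      (by rw [show (1:ℕ)-1 = 0 from rfl, F_zero]; omega)
      (le_trans le_rfl (F_ge 1))
    rw [h, dabs_one]
  · -- run ends start at 0
    simp [he.1, F_zero]
  · -- strict mono
    exact (F_strictMono (q := q)).comp hsm
  · -- constancy within runs of b
    intro n hn i h1 h2
    simp only at h1 h2 ⊢
    rw [b_run_const hq he hb n hn i h1 h2, hself n hn]
  · -- run value changes at run ends of b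
    intro n hn
    simp only
    have h1 : b (F q (e n)) = 2 - dabs q (e n) := hself n hn
    have h2 : b (F q (e n) + 1) = 2 - dabs q (e n + 1) := by
      have hmono : F q (e n) + 1 ≤ F q (e n + 1) :=
        F_strictMono (q := q) (show e n < e n + 1 by omega)
      have := (main_struct hq he hb (e n + 1) (by omega)).2 (F q (e n) + 1)
        (by rw [Nat.add_sub_cancel]; omega) hmono
      exact this
    have hne := he.2.2.2 n hn
    have hle1 := dabs_le hq (e n)
    have hle2 := dabs_le hq (e n + 1)
    rw [h1, h2]
    omega
  · -- run sums
    intro n hn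
    simp only
    have hconst := b_run_const hq he hb n hn
    have hpr : e (n-1) < e n := hsm (by omega : n - 1 < n)
    rw [Finset.Icc_add_one_left_eq_Ioc]
    have hsum : (∑ i ∈ Finset.Ioc (F q (e (n-1))) (F q (e n)), b i) =
        (F q (e n) - F q (e (n-1))) * (2 - dabs q (e n)) := by
      rw [Finset.sum_const_nat (fun i hi => by
        rw [Finset.mem_Ioc] at hi
        exact hconst i hi.1 hi.2), Nat.card_Ioc]
    rw [hsum]
    have hOsum : Ones q (e (n-1)) + (∑ i ∈ Finset.Ioc (e (n-1)) (e n), dabs q i)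
        = Ones q (e n) :=
      Finset.sum_Ioc_consecutive _ (Nat.zero_le _) (le_of_lt hpr)
    have hmid : (∑ i ∈ Finset.Ioc (e (n-1)) (e n), dabs q i)
        = (e n - e (n-1)) * dabs q (e n) := by
      rw [Finset.sum_const_nat (fun i hi => by
        rw [Finset.mem_Ioc] at hi
        exact he.2.2.1 n hn i hi.1 hi.2), Nat.card_Ioc]
    have hbn : b n = e n - e (n-1) := hb n hn
    have hle := dabs_le hq (e n)
    have hFr : F q (e n) = e n + Ones q (e n) := rfl
    have hFp : F q (e (n-1)) = e (n-1) + Ones q (e (n-1)) := rfl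
    rcases (show dabs q (e n) = 0 ∨ dabs q (e n) = 1 from by omega) with hD | hD <;>
      rw [hD] at hmid ⊢ <;> omega

/-- Uniqueness of Cloitre's sequence. -/
theorem cloitre_unique {a ea c ec : ℕ → ℕ}
    (ha : CloitreSelfGen a ea) (hc : CloitreSelfGen c ec) :
    ∀ n, 1 ≤ n → a n = c n := by
  obtain ⟨ha12, ha1, ⟨hae0, haem, haconst, hane⟩, hasum⟩ := ha
  obtain ⟨hc12, hc1, ⟨hce0, hcem, hcconst, hcne⟩, hcsum⟩ := hc
  have hage : ∀ n, n ≤ ea n := fun n => haem.le_apply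
  have key : ∀ n, ea n = ec n ∧ ∀ i, 1 ≤ i → i ≤ ea n + 1 → a i = c i := by
    intro n
    induction n with
    | zero =>
      refine ⟨by rw [hae0, hce0], ?_⟩
      intro i h1 h2
      rw [hae0] at h2
      have : i = 1 := by omega
      rw [this, ha1, hc1]
    | succ n ih =>
      obtain ⟨hee, hval⟩ := ih
      have hplt : ea n < ea (n+1) := haem (by omega : n < n+1)
      have hplt' : ea n < ec (n+1) := by
        rw [hee]; exact hcem (by omega : n < n+1)
      have hv : a (ea n + 1) = c (ea n + 1) := hval _ (by omega) (by omega)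
      have hv12 : a (ea n + 1) = 1 ∨ a (ea n + 1) = 2 := ha12 _ (by omega)
      have haconst' : ∀ i, ea n < i → i ≤ ea (n+1) → a i = a (ea n + 1) := by
        intro i h1 h2
        have c1 := haconst (n+1) (by omega) i (by rw [Nat.add_sub_cancel]; exact h1) h2
        have c2 := haconst (n+1) (by omega) (ea n + 1) (by rw [Nat.add_sub_cancel]; omega) hplt
        rw [c1, ← c2]
      have hcconst' : ∀ i, ea n < i → i ≤ ec (n+1) → c i = a (ea n + 1) := by
        intro i h1 h2
        have c1 := hcconst (n+1) (by omega) i (by rw [Nat.add_sub_cancel, ← hee]; exact h1) h2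
        have c2 := hcconst (n+1) (by omega) (ea n + 1) (by rw [Nat.add_sub_cancel, ← hee]; omega) hplt'
        rw [c1, ← c2, ← hv]
      have hasum' := hasum (n+1) (by omega)
      have hcsum' := hcsum (n+1) (by omega)
      rw [Nat.add_sub_cancel, Finset.Icc_add_one_left_eq_Ioc] at hasum' hcsum'
      rw [← hee] at hcsum'
      have hsa : (∑ i ∈ Finset.Ioc (ea n) (ea (n+1)), a i)
          = (ea (n+1) - ea n) * a (ea n + 1) := by
        rw [Finset.sum_const_nat (fun i hi => by
          rw [Finset.mem_Ioc] at hi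
          exact haconst' i hi.1 hi.2), Nat.card_Ioc]
      have hsc : (∑ i ∈ Finset.Ioc (ea n) (ec (n+1)), c i)
          = (ec (n+1) - ea n) * a (ea n + 1) := by
        rw [Finset.sum_const_nat (fun i hi => by
          rw [Finset.mem_Ioc] at hi
          exact hcconst' i hi.1 hi.2), Nat.card_Ioc]
      rw [hsa] at hasum'
      rw [hsc] at hcsum'
      have hn1 : a (n+1) = c (n+1) := hval (n+1) (by omega) (by have := hage n; omega)
      have heq1 : ea (n+1) = ec (n+1) := by
        rw [← hn1] at hcsum'
        rcases hv12 with h | h <;> rw [h] at hasum' hcsum' <;> omega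
      refine ⟨heq1, ?_⟩
      intro i h1 h2
      rcases (show i ≤ ea n + 1 ∨ (ea n < i ∧ i ≤ ea (n+1)) ∨ i = ea (n+1) + 1 from by omega)
        with h | ⟨h1', h2'⟩ | h
      · exact hval i h1 h
      · rw [haconst' i h1' h2', hcconst' i h1' (by rw [← heq1]; exact h2')]
      · have hA : a (ea (n+1)) = a (ea n + 1) := haconst' _ hplt le_rfl
        have hC : c (ea (n+1)) = a (ea n + 1) := by
          rw [heq1]; exact hcconst' _ hplt' le_rfl
        have hna := hane (n+1) (by omega)
        have hnc := hcne (n+1) (by omega)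
        rw [hA] at hna
        rw [← heq1] at hnc
        rw [hC] at hnc
        have ha2 := ha12 (ea (n+1) + 1) (by omega)
        have hc2 : c (ea (n+1) + 1) = 1 ∨ c (ea (n+1) + 1) = 2 := by
          have := hc12 (ec (n+1) + 1) (by omega)
          rw [← heq1] at this
          exact this
        rw [h]
        rcases hv12 with hvv | hvv <;> rw [hvv] at hna hnc <;> omega
  intro n hn
  exact (key n).2 n hn (by have := hage n; omega)

end CloitreProofAux


/-- Cloitre's sequence coincides with the run-length sequence
`b` of `(d'_k)_{k≥1}`: any sequence `a` with the Cloitre self-generating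
property satisfies `a n = b n` for all `n ≥ 1`. -/
theorem cloitre_eq_runLengths_of_dabs
    (q : ℕ → ℕ) (hq : IsRegularPaperfolding q)
    (e : ℕ → ℕ) (he : IsRunEnds (dabs q) e)
    (b : ℕ → ℕ) (hb : ∀ n, 1 ≤ n → b n = e n - e (n - 1))
    (a ea : ℕ → ℕ) (ha : CloitreSelfGen a ea) :
    ∀ n, 1 ≤ n → a n = b n := by
  exact CloitreProofAux.cloitre_unique ha (CloitreProofAux.b_cloitre hq he hb)
end

section
/- For all n ≥ 1, the number g_n of 1's appearing in b_1 b_2 ⋯ b_n satisfies 2n ≤ 3·g_n ≤ 2n + 4 (equivalently, 0 ≤ 3·g_n − 2n ≤ 4). -/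
set_option linter.unusedSectionVars false

section
variable {q : ℕ → ℕ} (hq : IsRegularPaperfolding q)
include hq

lemma qodd (n : ℕ) : q (2 * n + 1) = n % 2 := by
  rcases Nat.even_or_odd n with ⟨m, hm⟩ | ⟨m, hm⟩
  · subst hm
    have h : 2 * (m + m) + 1 = 4 * m + 1 := by ring
    rw [h, hq.2.2.2.1]; omega
  · subst hm
    have h : 2 * (2 * m + 1) + 1 = 4 * m + 3 := by ring
    rw [h, hq.2.2.2.2]; omega

lemma qeven (n : ℕ) : q (2 * n) = q n := by
  rcases Nat.eq_zero_or_pos n with h | h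
  · subst h; norm_num
  · exact hq.2.2.1 n h

lemma dabs_eq {n : ℕ} (hn : 2 ≤ n) : dabs q n = if q n = q (n - 1) then 0 else 1 := by
  unfold dabs dseq
  rw [if_neg (by omega)]
  rcases hq.1 n with h | h <;> rcases hq.1 (n - 1) with h' | h' <;> simp [h, h']

lemma dabs_one : dabs q 1 = 1 := by simp [dabs, dseq]

lemma dabs_two : dabs q 2 = 0 := by
  have h1 : q 1 = 0 := by have := hq.2.2.2.1 0; simpa using this
  have h2 : q 2 = q 1 := by have := qeven hq 1; simpa using this
  rw [dabs_eq hq (by norm_num)]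
  simp [h1, h2]

lemma dabs01 (n : ℕ) : dabs q n = 0 ∨ dabs q n = 1 := by
  match n, (by omega : n = 0 ∨ n = 1 ∨ 2 ≤ n) with
  | 0, _ => left; simp [dabs, dseq, hq.2.1]
  | 1, _ => right; exact dabs_one hq
  | n, Or.inr (Or.inr h) => rw [dabs_eq hq h]; split <;> simp

lemma d_pair {n : ℕ} (hn : 1 ≤ n) : dabs q (2 * n) + dabs q (2 * n + 1) = 1 := by
  have e1 : q (2 * n) = q n := qeven hq n
  have e2 : q (2 * n - 1) = (n - 1) % 2 := by
    have h : 2 * n - 1 = 2 * (n - 1) + 1 := by omega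
    rw [h]; exact qodd hq (n - 1)
  have e3 : q (2 * n + 1) = n % 2 := qodd hq n
  rw [dabs_eq hq (by omega), dabs_eq hq (by omega)]
  have h4 : 2 * n + 1 - 1 = 2 * n := by omega
  rw [h4, e1, e2, e3]
  rcases hq.1 n with h | h <;>
    rcases (by omega : n % 2 = 0 ∧ (n - 1) % 2 = 1 ∨ n % 2 = 1 ∧ (n - 1) % 2 = 0) with ⟨h5, h6⟩ | ⟨h5, h6⟩ <;>
      simp [h, h5, h6]

lemma bd_even {n : ℕ} (hn : 1 ≤ n) : dabs q (2 * n) ≠ dabs q (2 * n + 1) := by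
  have := d_pair hq hn
  omega

lemma bd_odd {n : ℕ} (hn : 1 ≤ n) :
    dabs q (2 * n + 1) ≠ dabs q (2 * n + 2) ↔ dabs q (n + 1) = 1 := by
  have e1 : q (2 * n) = q n := qeven hq n
  have e2 : q (2 * n + 2) = q (n + 1) := by
    have h : 2 * n + 2 = 2 * (n + 1) := by ring
    rw [h]; exact qeven hq (n + 1)
  have e3 : q (2 * n + 1) = n % 2 := qodd hq n
  rw [dabs_eq hq (by omega : 2 ≤ 2 * n + 1), dabs_eq hq (by omega : 2 ≤ 2 * n + 2),
    dabs_eq hq (by omega : 2 ≤ n + 1)]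
  have h4 : 2 * n + 1 - 1 = 2 * n := by omega
  have h5 : 2 * n + 2 - 1 = 2 * n + 1 := by omega
  have h6 : n + 1 - 1 = n := by omega
  rw [h4, h5, h6, e1, e2, e3]
  rcases hq.1 n with h | h <;> rcases hq.1 (n + 1) with h' | h' <;>
    rcases (by omega : n % 2 = 0 ∨ n % 2 = 1) with h'' | h'' <;> simp [h, h', h'']


lemma d_pair' {n a c : ℕ} (hn : 1 ≤ n) (ha : a = 2 * n) (hc : c = 2 * n + 1) :
    dabs q a + dabs q c = 1 := by subst ha hc; exact d_pair hq hn

lemma bd_even' {n a c : ℕ} (hn : 1 ≤ n) (ha : a = 2 * n) (hc : c = 2 * n + 1) :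
    dabs q a ≠ dabs q c := by subst ha hc; exact bd_even hq hn

lemma bd_odd' {n a c u : ℕ} (hn : 1 ≤ n) (ha : a = 2 * n + 1) (hc : c = 2 * n + 2)
    (hu : u = n + 1) : (dabs q a ≠ dabs q c) ↔ dabs q u = 1 := by
  subst ha hc hu; exact bd_odd hq hn

def Scount (q : ℕ → ℕ) (t : ℕ) : ℕ := ((Finset.Icc 1 t).filter fun i => dabs q i = 1).card

def Ccount (q : ℕ → ℕ) (m : ℕ) : ℕ :=
  ((Finset.Icc 1 m).filter fun i => dabs q i ≠ dabs q (i + 1)).card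

omit hq in
lemma S_zero : Scount q 0 = 0 := by simp [Scount]

omit hq in
lemma C_zero : Ccount q 0 = 0 := by simp [Ccount]

omit hq in
lemma S_succ' (t s : ℕ) (h : s = t + 1) :
    Scount q s = Scount q t + if dabs q s = 1 then 1 else 0 := by
  subst h
  unfold Scount
  rw [← Finset.insert_Icc_right_eq_Icc_add_one (by omega : 1 ≤ t + 1)]
  rw [Finset.filter_insert]
  split
  · rw [Finset.card_insert_of_notMem (by simp)]
  · simp

omit hq in
lemma C_succ' (m s u : ℕ) (hs : s = m + 1) (hu : u = s + 1) :
    Ccount q s = Ccount q m + if dabs q s ≠ dabs q u then 1 else 0 := by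
  subst hs hu
  unfold Ccount
  rw [← Finset.insert_Icc_right_eq_Icc_add_one (by omega : 1 ≤ m + 1)]
  rw [Finset.filter_insert]
  split
  · rw [Finset.card_insert_of_notMem (by simp)]
  · simp_all

lemma ind_eq (m : ℕ) : (if dabs q m = 1 then 1 else 0) = dabs q m := by
  rcases dabs01 hq m with h | h <;> simp [h]

lemma S_odd : ∀ k, Scount q (2 * k + 1) = k + 1 := by
  intro k
  induction k with
  | zero =>
      have s := S_succ' (q := q) 0 (2 * 0 + 1) (by ring)
      rw [s, S_zero, show 2 * 0 + 1 = 1 by ring, dabs_one hq]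
      norm_num
  | succ k ih =>
      have s1 := S_succ' (q := q) (2 * k + 2) (2 * k + 3) (by ring)
      have s2 := S_succ' (q := q) (2 * k + 1) (2 * k + 2) (by ring)
      rw [ind_eq hq] at s1 s2
      have hp := d_pair' hq (show 1 ≤ k + 1 by omega)
        (show 2 * k + 2 = 2 * (k + 1) by ring) (show 2 * k + 3 = 2 * (k + 1) + 1 by ring)
      rw [show 2 * (k + 1) + 1 = 2 * k + 3 by ring]
      omega

lemma S_even {k : ℕ} (hk : 1 ≤ k) : Scount q (2 * k) = k + dabs q (2 * k) := by
  have s := S_succ' (q := q) (2 * (k - 1) + 1) (2 * k) (by omega)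
  rw [ind_eq hq, S_odd hq] at s
  omega

lemma S_bounds (t : ℕ) : 2 * t ≤ 4 * Scount q t ∧ 4 * Scount q t ≤ 2 * t + 4 := by
  rcases Nat.even_or_odd t with ⟨k, hk⟩ | ⟨k, hk⟩
  · have h : t = 2 * k := by omega
    subst h
    rcases Nat.eq_zero_or_pos k with h | h
    · subst h; simp [S_zero]
    · have := S_even hq (k := k) h
      have := dabs01 hq (2 * k)
      omega
  · have h : t = 2 * k + 1 := by omega
    subst h
    have := S_odd hq k
    omega

lemma S_tight {t : ℕ} (ht : dabs q (t + 1) = 1) : 4 * Scount q t ≤ 2 * t + 2 := by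
  rcases Nat.even_or_odd t with ⟨k, hk⟩ | ⟨k, hk⟩
  · have h : t = 2 * k := by omega
    subst h
    rcases Nat.eq_zero_or_pos k with h | h
    · subst h; simp [S_zero]
    · have hp := d_pair' hq h rfl rfl
      have hs := S_even hq (k := k) h
      omega
  · have h : t = 2 * k + 1 := by omega
    subst h
    have := S_odd hq k
    omega

lemma C_formula : ∀ t, Ccount q (2 * t) = t + Scount q t ∧
    Ccount q (2 * t + 1) = t + Scount q (t + 1) := by
  intro t
  induction t with
  | zero =>
      constructor
      · rw [show 2 * 0 = 0 by ring, C_zero, S_zero]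
      · have c := C_succ' (q := q) 0 (2 * 0 + 1) (2 * 0 + 1 + 1) (by ring) rfl
        have s := S_succ' (q := q) 0 (0 + 1) rfl
        rw [show 2 * 0 + 1 = 1 by ring, show 2 * 0 + 1 + 1 = 2 by ring] at c
        rw [show (0 : ℕ) + 1 = 1 by ring] at s
        rw [c, C_zero, s, S_zero, dabs_one hq, dabs_two hq]
        norm_num
  | succ t ih =>
      have c1 := C_succ' (q := q) (2 * t + 1) (2 * t + 2) (2 * t + 3) (by ring) (by ring)
      have c2 := C_succ' (q := q) (2 * t + 2) (2 * t + 3) (2 * t + 4) (by ring) (by ring)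
      have hbe := bd_even' hq (show 1 ≤ t + 1 by omega)
        (show 2 * t + 2 = 2 * (t + 1) by ring) (show 2 * t + 3 = 2 * (t + 1) + 1 by ring)
      have hbo := bd_odd' hq (show 1 ≤ t + 1 by omega)
        (show 2 * t + 3 = 2 * (t + 1) + 1 by ring) (show 2 * t + 4 = 2 * (t + 1) + 2 by ring)
        (show t + 2 = t + 1 + 1 by ring)
      have s := S_succ' (q := q) (t + 1) (t + 2) (by ring)
      rw [ind_eq hq] at s
      rw [if_pos hbe] at c1
      rw [show 2 * (t + 1) + 1 = 2 * t + 3 by ring, show 2 * (t + 1) = 2 * t + 2 by ring,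
        show t + 1 + 1 = t + 2 by ring]
      have hd01 := dabs01 hq (t + 2)
      by_cases hd : dabs q (t + 2) = 1
      · rw [if_pos (hbo.mpr hd)] at c2
        omega
      · rw [if_neg (fun hx => hd (hbo.mp hx))] at c2
        omega

lemma C_bound {m : ℕ} (hm : 1 ≤ m) (hbd : dabs q m ≠ dabs q (m + 1)) :
    3 * m ≤ 4 * Ccount q m ∧ 4 * Ccount q m ≤ 3 * m + 4 := by
  rcases Nat.even_or_odd m with ⟨t, ht⟩ | ⟨t, ht⟩
  · have h : m = 2 * t := by omega
    subst h
    have h1 := (C_formula hq t).1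
    have h2 := S_bounds hq t
    omega
  · have h : m = 2 * t + 1 := by omega
    subst h
    have h1 := (C_formula hq t).2
    rcases Nat.eq_zero_or_pos t with h | h
    · subst h
      have h2 := S_odd hq 0
      norm_num at h1 h2 ⊢
      omega
    · have hd : dabs q (t + 1) = 1 := by
        refine (bd_odd' hq h rfl (show 2 * t + 1 + 1 = 2 * t + 2 by ring) rfl).mp hbd
      have h3 := S_succ' (q := q) t (t + 1) rfl
      rw [ind_eq hq, hd] at h3
      have h4 := S_bounds hq t
      have h5 := S_tight hq hd
      omega

variable {e : ℕ → ℕ} (he : IsRunEnds (dabs q) e)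
include he

lemma gap2 (n : ℕ) : e (n + 1) ≤ e n + 2 := by
  obtain ⟨he0, hmono, hrun, hend⟩ := he
  by_contra hcon
  push_neg at hcon
  have hrunn : ∀ i, e n < i → i ≤ e (n + 1) → dabs q i = dabs q (e (n + 1)) := by
    have h := hrun (n + 1) (by omega)
    simpa using h
  rcases Nat.eq_zero_or_pos (e n) with h0 | h0
  · have h1 : dabs q 1 = dabs q (e (n + 1)) := hrunn 1 (by omega) (by omega)
    have h2 : dabs q 2 = dabs q (e (n + 1)) := hrunn 2 (by omega) (by omega)
    rw [dabs_one hq, dabs_two hq] at *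
    omega
  · rcases Nat.even_or_odd (e n) with ⟨k, hk⟩ | ⟨k, hk⟩
    · have hj : e n + 2 = 2 * (k + 1) := by omega
      have h1 : dabs q (e n + 2) = dabs q (e (n + 1)) := hrunn _ (by omega) (by omega)
      have h2 : dabs q (e n + 3) = dabs q (e (n + 1)) := hrunn _ (by omega) (by omega)
      exact bd_even' hq (show 1 ≤ k + 1 by omega) hj (show e n + 3 = 2 * (k + 1) + 1 by omega)
        (h1.trans h2.symm)
    · have hj : e n + 1 = 2 * (k + 1) := by omega
      have h1 : dabs q (e n + 1) = dabs q (e (n + 1)) := hrunn _ (by omega) (by omega)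
      have h2 : dabs q (e n + 2) = dabs q (e (n + 1)) := hrunn _ (by omega) (by omega)
      exact bd_even' hq (show 1 ≤ k + 1 by omega) hj (show e n + 2 = 2 * (k + 1) + 1 by omega)
        (h1.trans h2.symm)

lemma C_e (n : ℕ) : Ccount q (e n) = n := by
  induction n with
  | zero => rw [he.1, C_zero]
  | succ n ih =>
      have hgap := gap2 hq he n
      obtain ⟨he0, hmono, hrun, hend⟩ := he
      have hlt : e n < e (n + 1) := hmono (Nat.lt_succ_self n)
      have hbdn : dabs q (e (n + 1)) ≠ dabs q (e (n + 1) + 1) := hend (n + 1) (by omega)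
      have hrunn : ∀ i, e n < i → i ≤ e (n + 1) → dabs q i = dabs q (e (n + 1)) := by
        have h := hrun (n + 1) (by omega)
        simpa using h
      rcases (by omega : e (n + 1) = e n + 1 ∨ e (n + 1) = e n + 2) with hc | hc
      · have c := C_succ' (q := q) (e n) (e n + 1) (e n + 2) rfl rfl
        rw [show e n + 1 = e (n + 1) from hc.symm,
          show e n + 2 = e (n + 1) + 1 by omega] at c
        rw [c, if_pos hbdn, ih]
      · have c1 := C_succ' (q := q) (e n) (e n + 1) (e n + 2) rfl rfl
        have c2 := C_succ' (q := q) (e n + 1) (e n + 2) (e n + 3) rfl rfl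
        have hm1 : dabs q (e n + 1) = dabs q (e (n + 1)) := hrunn _ (by omega) (by omega)
        have hm2 : dabs q (e n + 2) = dabs q (e (n + 1)) := hrunn _ (by omega) (by omega)
        rw [if_neg (by rw [hm1, hm2]; exact fun h => h rfl)] at c1
        rw [show e n + 2 = e (n + 1) from hc.symm,
          show e n + 3 = e (n + 1) + 1 by omega] at c2
        rw [c2, if_pos hbdn, c1, ih]

end

/-- with `g n` the number of indices `1 ≤ i ≤ n` with `b i = 1`
(where `b` is the run-length sequence of `(d'_k)_{k≥1}`), one has
`2n ≤ 3 * g n ≤ 2n + 4` for all `n ≥ 1`. -/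
theorem cloitre_count_ones_bounds
    (q : ℕ → ℕ) (hq : IsRegularPaperfolding q)
    (e : ℕ → ℕ) (he : IsRunEnds (dabs q) e)
    (b : ℕ → ℕ) (hb : ∀ n, 1 ≤ n → b n = e n - e (n - 1))
    (g : ℕ → ℕ) (hg : ∀ n, g n = ((Finset.Icc 1 n).filter fun i => b i = 1).card) :
    ∀ n, 1 ≤ n → 2 * n ≤ 3 * g n ∧ 3 * g n ≤ 2 * n + 4 := by
  have hge : ∀ n, g n + e n = 2 * n := by
    intro n
    induction n with
    | zero =>
        rw [hg 0, he.1]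
        simp
    | succ n ih =>
        have hgap := gap2 hq he n
        have hlt : e n < e (n + 1) := he.2.1 (Nat.lt_succ_self n)
        have hbn : b (n + 1) = e (n + 1) - e n := by
          have h := hb (n + 1) (by omega)
          simpa using h
        have hgs : g (n + 1) = g n + if b (n + 1) = 1 then 1 else 0 := by
          rw [hg (n + 1), hg n, ← Finset.insert_Icc_right_eq_Icc_add_one (by omega : 1 ≤ n + 1),
            Finset.filter_insert]
          split
          · rw [Finset.card_insert_of_notMem (by simp)]
          · simp
        rcases (by omega : e (n + 1) = e n + 1 ∨ e (n + 1) = e n + 2) with hc | hc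
        · rw [hgs, if_pos (by omega)]
          omega
        · rw [hgs, if_neg (by omega)]
          omega
  intro n hn
  have hmn : 1 ≤ e n := by
    have h := he.2.1 (show 0 < n by omega)
    rw [he.1] at h
    omega
  have hbdn : dabs q (e n) ≠ dabs q (e n + 1) := he.2.2.2 n hn
  have hcb := C_bound hq hmn hbdn
  rw [C_e hq he n] at hcb
  have := hge n
  omega
end

section
/- Every run of the sequence (b_k)_{k≥1} has length 1, 2, or 4; that is, r_n ∈ {1, 2, 4} for all n ≥ 1, where r_n is the length of the n'th run of (b_k)_{k≥1}. -/
/-- every run of `(b_k)_{k≥1}` has length 1, 2 or 4; i.e.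
`r n = e2 n - e2 (n-1) ∈ {1, 2, 4}` for all `n ≥ 1`, where `e2` enumerates
the ending positions of the runs of `b`. -/
theorem cloitre_runLengths_of_b_mem_one_two_four
    (q : ℕ → ℕ) (hq : IsRegularPaperfolding q)
    (e : ℕ → ℕ) (he : IsRunEnds (dabs q) e)
    (b : ℕ → ℕ) (hb : ∀ n, 1 ≤ n → b n = e n - e (n - 1))
    (e2 : ℕ → ℕ) (he2 : IsRunEnds b e2) :
    ∀ n, 1 ≤ n →
      e2 n - e2 (n - 1) = 1 ∨ e2 n - e2 (n - 1) = 2 ∨ e2 n - e2 (n - 1) = 4 := by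
  obtain ⟨hval, hq0, hq2, hq41, hq43⟩ := hq
  obtain ⟨he0, hemono, heconst, hebreak⟩ := he
  obtain ⟨he20, he2mono, he2const, he2break⟩ := he2
  -- basic values of s = dabs q
  have hs1 : dabs q 1 = 1 := by simp [dabs, dseq]
  have hq1 : q 1 = 0 := by simpa using hq41 0
  have hq2v : q 2 = 0 := by
    have h := hq2 1 (by omega); norm_num at h; omega
  have hs2 : dabs q 2 = 0 := by
    simp [dabs, dseq, hq1, hq2v]
  -- S2 : breaks at even positions
  have hS2 : ∀ m, 1 ≤ m → dabs q (2*m) ≠ dabs q (2*m+1) := by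
    intro m hm
    have hkey : q (2*m-1) ≠ q (2*m+1) := by
      rcases Nat.even_or_odd m with ⟨t, ht⟩ | ⟨t, ht⟩
      · have e1 : 2*m-1 = 4*(t-1)+3 := by omega
        have e2' : 2*m+1 = 4*t+1 := by omega
        rw [e1, e2', hq43, hq41]; omega
      · have e1 : 2*m-1 = 4*t+1 := by omega
        have e2' : 2*m+1 = 4*t+3 := by omega
        rw [e1, e2', hq41, hq43]; omega
    have b1 : q (2*m-1) ≤ 1 := by rcases hval (2*m-1) with h | h <;> omega
    have b2 : q (2*m) ≤ 1 := by rcases hval (2*m) with h | h <;> omega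
    have b3 : q (2*m+1) ≤ 1 := by rcases hval (2*m+1) with h | h <;> omega
    simp only [dabs, dseq, if_neg (show 2*m ≠ 1 by omega),
      if_neg (show 2*m+1 ≠ 1 by omega)]
    rw [show 2*m+1-1 = 2*m by omega]
    omega
  -- S3 : length-2 runs at (2m-1, 2m) iff s m = 0
  have hS3 : ∀ m, 2 ≤ m → (dabs q (2*m-1) = dabs q (2*m) ↔ dabs q m = 0) := by
    intro m hm
    have h1 : q (2*m) = q m := hq2 m (by omega)
    have h2 : q (2*m-2) = q (m-1) := by
      have h := hq2 (m-1) (by omega)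
      rw [show 2*(m-1) = 2*m-2 by omega] at h; exact h
    have b1 : q (2*m-1) ≤ 1 := by rcases hval (2*m-1) with h | h <;> omega
    have b2 : q m ≤ 1 := by rcases hval m with h | h <;> omega
    have b3 : q (m-1) ≤ 1 := by rcases hval (m-1) with h | h <;> omega
    simp only [dabs, dseq, if_neg (show 2*m-1 ≠ 1 by omega),
      if_neg (show 2*m ≠ 1 by omega), if_neg (show m ≠ 1 by omega)]
    rw [show 2*m-1-1 = 2*m-2 by omega, show 2*m - 1 = 2*m-1 from rfl, h1, h2]
    omega
  have hsval : ∀ n, dabs q n ≤ 1 := by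
    intro n
    by_cases hn : n = 1
    · simp [dabs, dseq, hn]
    · have h1 : q n ≤ 1 := by rcases hval n with h | h <;> omega
      have h2 : q (n-1) ≤ 1 := by rcases hval (n-1) with h | h <;> omega
      simp only [dabs, dseq, if_neg hn]
      omega
  -- no three consecutive equal values of s
  have hno3 : ∀ i, 1 ≤ i → dabs q i = dabs q (i+1) → dabs q (i+1) = dabs q (i+2) → False := by
    intro i hi g1 g2
    rcases Nat.even_or_odd i with ⟨t, ht⟩ | ⟨t, ht⟩
    · have ht' : i = 2*t := by omega
      rw [ht'] at g1
      exact hS2 t (by omega) g1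
    · have := hS2 (t+1) (by omega)
      apply this
      rw [show 2*(t+1) = i+1 by omega]
      exact g2
  -- no three consecutive zeros / nonzeros of s (m ≥ 2)
  have hP : ∀ m, 2 ≤ m → dabs q m ≠ 0 → dabs q (m+1) ≠ 0 → dabs q (m+2) ≠ 0 → False := by
    intro m hm z1 z2 z3
    have v1 := hsval m; have v2 := hsval (m+1); have v3 := hsval (m+2)
    rcases Nat.even_or_odd m with ⟨t, ht⟩ | ⟨t, ht⟩
    · have h := hS2 t (by omega)
      rw [show 2*t = m by omega] at h
      omega
    · have h := hS2 (t+1) (by omega)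
      rw [show 2*(t+1) = m+1 by omega] at h
      rw [show m+1+1 = m+2 by omega] at h
      omega
  have hP0 : ∀ m, 2 ≤ m → dabs q m = 0 → dabs q (m+1) = 0 → dabs q (m+2) = 0 → False := by
    intro m hm z1 z2 z3
    rcases Nat.even_or_odd m with ⟨t, ht⟩ | ⟨t, ht⟩
    · have h := hS2 t (by omega)
      rw [show 2*t = m by omega] at h
      omega
    · have h := hS2 (t+1) (by omega)
      rw [show 2*(t+1) = m+1 by omega] at h
      rw [show m+1+1 = m+2 by omega] at h
      omega
  -- shifted run-end facts for e
  have heconst' : ∀ n, ∀ i, e n < i → i ≤ e (n+1) → dabs q i = dabs q (e (n+1)) := by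
    intro n i h1 h2
    have h := heconst (n+1) (by omega) i
    rw [Nat.add_sub_cancel] at h
    exact h h1 h2
  have hebreak' : ∀ n, dabs q (e (n+1)) ≠ dabs q (e (n+1) + 1) :=
    fun n => hebreak (n+1) (by omega)
  have hegt : ∀ n, e n < e (n+1) := fun n => hemono (by omega)
  -- A1 : runs of s have length 1 or 2
  have hA1 : ∀ n, e (n+1) = e n + 1 ∨ e (n+1) = e n + 2 := by
    intro n
    by_contra hc
    push_neg at hc
    obtain ⟨c1, c2⟩ := hc
    have hlt := hegt n
    have g1 : dabs q (e (n+1) - 2) = dabs q (e (n+1)) := heconst' n _ (by omega) (by omega)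
    have g2 : dabs q (e (n+1) - 1) = dabs q (e (n+1)) := heconst' n _ (by omega) (by omega)
    refine hno3 (e (n+1) - 2) (by omega) ?_ ?_
    · rw [show e (n+1) - 2 + 1 = e (n+1) - 1 by omega, g1, g2]
    · rw [show e (n+1) - 2 + 1 = e (n+1) - 1 by omega,
        show e (n+1) - 2 + 2 = e (n+1) by omega, g2]
  -- A2 : a length-2 run ends at an even position 2m ≥ 4 with s m = 0
  have hA2 : ∀ n, e (n+1) = e n + 2 →
      e (n+1) % 2 = 0 ∧ 4 ≤ e (n+1) ∧ dabs q (e (n+1) / 2) = 0 := by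
    intro n h
    have g1 : dabs q (e (n+1) - 1) = dabs q (e (n+1)) := heconst' n _ (by omega) (by omega)
    rcases Nat.even_or_odd (e (n+1)) with ⟨t, ht⟩ | ⟨t, ht⟩
    · by_cases h1 : t = 1
      · exfalso
        rw [show e (n+1) - 1 = 1 by omega] at g1
        rw [show e (n+1) = 2 by omega] at g1
        rw [hs1, hs2] at g1
        omega
      · have ht2 : 2 ≤ t := by omega
        rw [show e (n+1) - 1 = 2*t - 1 by omega] at g1
        rw [show e (n+1) = 2*t by omega] at g1
        refine ⟨by omega, by omega, ?_⟩
        rw [show e (n+1) / 2 = t by omega]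
        exact (hS3 t ht2).mp g1
    · exfalso
      rw [show e (n+1) - 1 = 2*t by omega] at g1
      rw [show e (n+1) = 2*t+1 by omega] at g1
      exact hS2 t (by omega) g1
  -- A3 : forced length-2 run
  have hA3 : ∀ n, e n % 2 = 0 → 2 ≤ e n → dabs q (e n / 2 + 1) = 0 → e (n+1) = e n + 2 := by
    intro n hpar hge hz
    rcases hA1 n with h' | h'
    · exfalso
      have hbk := hebreak' n
      rw [h'] at hbk
      have hm := (hS3 (e n / 2 + 1) (by omega)).mpr hz
      rw [show 2*(e n / 2 + 1) - 1 = e n + 1 by omega,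
        show 2*(e n / 2 + 1) = e n + 2 by omega] at hm
      exact hbk hm
    · exact h'
  -- A5 : after an odd-ending run, the next run has length 1
  have hA5 : ∀ n, e n % 2 = 1 → e (n+1) = e n + 1 := by
    intro n h
    rcases hA1 n with h' | h'
    · exact h'
    · exfalso; have := (hA2 n h').1; omega
  -- b facts
  have hbval : ∀ k, b (k+1) = e (k+1) - e k := by
    intro k
    have h := hb (k+1) (by omega)
    rw [Nat.add_sub_cancel] at h
    exact h
  have hb12 : ∀ k, b (k+1) = 1 ∨ b (k+1) = 2 := by
    intro k
    have hbv := hbval k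
    have := hegt k
    rcases hA1 k with h | h <;> omega
  have hbe1 : ∀ k, b (k+1) = 1 → e (k+1) = e k + 1 := by
    intro k h
    have hbv := hbval k
    have := hegt k
    rcases hA1 k with h' | h' <;> omega
  have hbe2 : ∀ k, b (k+1) = 2 → e (k+1) = e k + 2 := by
    intro k h
    have hbv := hbval k
    have := hegt k
    rcases hA1 k with h' | h' <;> omega
  -- lemA : no five consecutive equal values of b
  have lemA : ∀ k, b (k+1) = b (k+2) → b (k+2) = b (k+3) → b (k+3) = b (k+4) →
      b (k+4) = b (k+5) → False := by
    intro k h1 h2 h3 h4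
    rcases hb12 k with hv | hv
    · -- all ones
      have hv2 : b (k+2) = 1 := by omega
      have hv3 : b (k+3) = 1 := by omega
      have hv4 : b (k+4) = 1 := by omega
      have hv5 : b (k+5) = 1 := by omega
      have E1 : e (k+1) = e k + 1 := hbe1 k hv
      have E2 : e (k+2) = e (k+1) + 1 := hbe1 (k+1) hv2
      have E3 : e (k+3) = e (k+2) + 1 := hbe1 (k+2) hv3
      have E4 : e (k+4) = e (k+3) + 1 := hbe1 (k+3) hv4
      have E5 : e (k+5) = e (k+4) + 1 := hbe1 (k+4) hv5
      rcases Nat.mod_two_eq_zero_or_one (e k) with hpar | hpar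
      · -- e k even
        by_cases h0 : e k = 0
        · have hE2v : e (k+2) = 2 := by omega
          have hA : e (k+3) = e (k+2) + 2 :=
            hA3 (k+2) (by omega) (by omega) (by rw [hE2v]; exact hs2)
          omega
        · have z1 : dabs q (e k / 2 + 1) ≠ 0 := by
            intro hz
            have hA : e (k+1) = e k + 2 := hA3 k hpar (by omega) hz
            omega
          have z2 : dabs q (e k / 2 + 2) ≠ 0 := by
            intro hz
            have hA : e (k+3) = e (k+2) + 2 :=
              hA3 (k+2) (by omega) (by omega)
                (by rw [show e (k+2) / 2 + 1 = e k / 2 + 2 by omega]; exact hz)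
            omega
          have z3 : dabs q (e k / 2 + 3) ≠ 0 := by
            intro hz
            have hA : e (k+5) = e (k+4) + 2 :=
              hA3 (k+4) (by omega) (by omega)
                (by rw [show e (k+4) / 2 + 1 = e k / 2 + 3 by omega]; exact hz)
            omega
          exact hP (e k / 2 + 1) (by omega) z1 z2 z3
      · -- e k odd
        obtain ⟨k', rfl⟩ : ∃ k', k = k' + 1 := by
          cases k with
          | zero => exfalso; rw [he0] at hpar; omega
          | succ m => exact ⟨m, rfl⟩
        have E0 : e (k'+1) = e k' + 1 := by
          rcases hA1 k' with h' | h'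
          · exact h'
          · exfalso; have := (hA2 k' h').1; omega
        by_cases h0 : e k' = 0
        · have hE : e (k'+1+1) = 2 := by omega
          have hA : e (k'+1+2) = e (k'+1+1) + 2 :=
            hA3 (k'+1+1) (by omega) (by omega) (by rw [hE]; exact hs2)
          omega
        · have hp : e k' % 2 = 0 := by omega
          have z1 : dabs q (e k' / 2 + 1) ≠ 0 := by
            intro hz
            have hA : e (k'+1) = e k' + 2 := hA3 k' hp (by omega) hz
            omega
          have z2 : dabs q (e k' / 2 + 2) ≠ 0 := by
            intro hz
            have hA : e (k'+1+2) = e (k'+1+1) + 2 :=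
              hA3 (k'+1+1) (by omega) (by omega)
                (by rw [show e (k'+1+1) / 2 + 1 = e k' / 2 + 2 by omega]; exact hz)
            omega
          have z3 : dabs q (e k' / 2 + 3) ≠ 0 := by
            intro hz
            have hA : e (k'+1+4) = e (k'+1+3) + 2 :=
              hA3 (k'+1+3) (by omega) (by omega)
                (by rw [show e (k'+1+3) / 2 + 1 = e k' / 2 + 3 by omega]; exact hz)
            omega
          exact hP (e k' / 2 + 1) (by omega) z1 z2 z3
    · -- all twos
      have hv2 : b (k+2) = 2 := by omega
      have hv3 : b (k+3) = 2 := by omega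
      have E1 : e (k+1) = e k + 2 := hbe2 k hv
      have E2 : e (k+2) = e (k+1) + 2 := hbe2 (k+1) hv2
      have E3 : e (k+3) = e (k+2) + 2 := hbe2 (k+2) hv3
      have p1 : e (k+1) % 2 = 0 := (hA2 k E1).1
      have g1 : 4 ≤ e (k+1) := (hA2 k E1).2.1
      have z1 : dabs q (e (k+1) / 2) = 0 := (hA2 k E1).2.2
      have p2 : e (k+2) % 2 = 0 := (hA2 (k+1) E2).1
      have z2 : dabs q (e (k+2) / 2) = 0 := (hA2 (k+1) E2).2.2
      have z3 : dabs q (e (k+3) / 2) = 0 := (hA2 (k+2) E3).2.2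
      refine hP0 (e (k+1) / 2) (by omega) z1 ?_ ?_
      · rw [show e (k+1) / 2 + 1 = e (k+2) / 2 by omega]; exact z2
      · rw [show e (k+1) / 2 + 2 = e (k+3) / 2 by omega]; exact z3
  -- lemB : no run of b of length exactly 3
  have lemB : ∀ k, (k = 0 ∨ (1 ≤ k ∧ b k ≠ b (k+1))) → b (k+1) = b (k+2) →
      b (k+2) = b (k+3) → b (k+3) ≠ b (k+4) → False := by
    intro k hleft h1 h2 h3
    rcases hb12 k with hv | hv
    · -- ones
      have hv2 : b (k+2) = 1 := by omega
      have hv3 : b (k+3) = 1 := by omega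
      have E1 : e (k+1) = e k + 1 := hbe1 k hv
      have E2 : e (k+2) = e (k+1) + 1 := hbe1 (k+1) hv2
      have E3 : e (k+3) = e (k+2) + 1 := hbe1 (k+2) hv3
      rcases hleft with rfl | ⟨hk, hne⟩
      · -- k = 0
        have hE : e (0+2) = 2 := by rw [he0] at E1; omega
        have hA : e (0+3) = e (0+2) + 2 :=
          hA3 (0+2) (by omega) (by omega) (by rw [hE]; exact hs2)
        omega
      · obtain ⟨k', rfl⟩ : ∃ k', k = k' + 1 := ⟨k-1, by omega⟩
        have hvk : b (k'+1) = 2 := by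
          rcases hb12 k' with h | h
          · exfalso; exact hne (by omega)
          · exact h
        have E0 : e (k'+1) = e k' + 2 := hbe2 k' hvk
        have hpar : e (k'+1) % 2 = 0 := (hA2 k' E0).1
        have hodd : e (k'+1+3) % 2 = 1 := by omega
        have hA : e (k'+1+4) = e (k'+1+3) + 1 := hA5 (k'+1+3) hodd
        have hb4 : b (k'+1+4) = e (k'+1+4) - e (k'+1+3) := hbval (k'+1+3)
        have := hegt (k'+1+3)
        omega
    · -- twos : a run of three 2's is impossible
      have hv2 : b (k+2) = 2 := by omega
      have hv3 : b (k+3) = 2 := by omega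
      have E1 : e (k+1) = e k + 2 := hbe2 k hv
      have E2 : e (k+2) = e (k+1) + 2 := hbe2 (k+1) hv2
      have E3 : e (k+3) = e (k+2) + 2 := hbe2 (k+2) hv3
      have p1 : e (k+1) % 2 = 0 := (hA2 k E1).1
      have g1 : 4 ≤ e (k+1) := (hA2 k E1).2.1
      have z1 : dabs q (e (k+1) / 2) = 0 := (hA2 k E1).2.2
      have z2 : dabs q (e (k+2) / 2) = 0 := (hA2 (k+1) E2).2.2
      have z3 : dabs q (e (k+3) / 2) = 0 := (hA2 (k+2) E3).2.2
      refine hP0 (e (k+1) / 2) (by omega) z1 ?_ ?_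
      · rw [show e (k+1) / 2 + 1 = e (k+2) / 2 by omega]; exact z2
      · rw [show e (k+1) / 2 + 2 = e (k+3) / 2 by omega]; exact z3
  -- main reduction
  intro n hn
  obtain ⟨nn, rfl⟩ : ∃ nn, n = nn + 1 := ⟨n - 1, by omega⟩
  simp only [Nat.add_sub_cancel]
  by_contra hcon
  push_neg at hcon
  obtain ⟨c1, c2, c4⟩ := hcon
  have hlt : e2 nn < e2 (nn+1) := he2mono (by omega)
  have hconst2 : ∀ i, e2 nn < i → i ≤ e2 (nn+1) → b i = b (e2 (nn+1)) := by
    intro i hi1 hi2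
    have h := he2const (nn+1) (by omega) i
    rw [Nat.add_sub_cancel] at h
    exact h hi1 hi2
  rcases (show e2 (nn+1) - e2 nn = 3 ∨ 5 ≤ e2 (nn+1) - e2 nn by omega) with hL | hL
  · -- length 3
    have b1 : b (e2 nn + 1) = b (e2 (nn+1)) := hconst2 _ (by omega) (by omega)
    have b2 : b (e2 nn + 2) = b (e2 (nn+1)) := hconst2 _ (by omega) (by omega)
    have b3 : b (e2 nn + 3) = b (e2 (nn+1)) := hconst2 _ (by omega) (by omega)
    have hbrk : b (e2 (nn+1)) ≠ b (e2 (nn+1) + 1) := he2break (nn+1) (by omega)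
    have hEv : e2 (nn+1) = e2 nn + 3 := by omega
    rw [hEv] at b1 b2 b3 hbrk
    have hh3 : b (e2 nn + 3) ≠ b (e2 nn + 4) := by
      rw [show e2 nn + 4 = e2 nn + 3 + 1 by omega]
      exact hbrk
    have hleft : e2 nn = 0 ∨ (1 ≤ e2 nn ∧ b (e2 nn) ≠ b (e2 nn + 1)) := by
      cases nn with
      | zero => exact Or.inl he20
      | succ m =>
        refine Or.inr ⟨?_, he2break (m+1) (by omega)⟩
        have := he2mono (show 0 < m + 1 by omega)
        omega
    exact lemB (e2 nn) hleft (by omega) (by omega) hh3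
  · -- length ≥ 5
    have hEv : e2 nn + 5 ≤ e2 (nn+1) := by omega
    have b1 : b (e2 nn + 1) = b (e2 (nn+1)) := hconst2 _ (by omega) (by omega)
    have b2 : b (e2 nn + 2) = b (e2 (nn+1)) := hconst2 _ (by omega) (by omega)
    have b3 : b (e2 nn + 3) = b (e2 (nn+1)) := hconst2 _ (by omega) (by omega)
    have b4 : b (e2 nn + 4) = b (e2 (nn+1)) := hconst2 _ (by omega) (by omega)
    have b5 : b (e2 nn + 5) = b (e2 (nn+1)) := hconst2 _ (by omega) (by omega)
    exact lemA (e2 nn) (by omega) (by omega) (by omega) (by omega)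
end

section
/- The map f ↦ P_f from infinite sequences over {−1, 1} to infinite paperfolding sequences is injective; consequently there are uncountably many infinite paperfolding sequences. -/
/-! Since `|P_f| = 2 ^ |f| - 1`, the instruction `a` sits at position `2 ^ |f|` of `P_{f a}`, so an
infinite paperfolding sequence satisfies `p (2 ^ n) = F n` and determines its instructions.
Conversely the words `P_{F_0 ⋯ F_n}` form a prefix chain, so every `F ∈ {-1, 1}^ℕ` has a
paperfolding sequence; hence `p ↦ (p (2 ^ n))_n` maps the set of paperfolding sequences onto the
uncountable set `{-1, 1}^ℕ`. -/

/-- `P` computes the finite paperfolding sequences: `P ε = ε` and, for a word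
`f` of unfolding instructions over `{-1, 1}` and an instruction `a ∈ {-1, 1}`,
`P (f a) = (P f) · a · (-(P f))^R`, where `-x` negates every entry of `x` and
`x^R` is the reversal of `x`. -/
def IsPaperfold (P : List ℤ → List ℤ) : Prop :=
  P [] = [] ∧
    ∀ (f : List ℤ), (∀ x ∈ f, x = -1 ∨ x = 1) → ∀ a : ℤ, (a = -1 ∨ a = 1) →
      P (f ++ [a]) = P f ++ a :: (((P f).map fun x => -x).reverse)

/-- The finite word `l` is a prefix of the infinite sequence
`p 1, p 2, p 3, …` (indexed from 1; `p 0` is irrelevant). -/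
def PrefixOfSeq (l : List ℤ) (p : ℕ → ℤ) : Prop :=
  ∀ i : ℕ, ∀ h : i < l.length, l[i]'h = p (i + 1)

/-- `p 1, p 2, p 3, …` is the infinite paperfolding sequence associated with
the infinite sequence `F` of unfolding instructions: every finite paperfolding
word `P (F 0 ⋯ F n)` is a prefix of it. -/
def IsInfPaperfolding (P : List ℤ → List ℤ) (F : ℕ → ℤ) (p : ℕ → ℤ) : Prop :=
  ∀ n : ℕ, PrefixOfSeq (P (List.ofFn fun i : Fin (n + 1) => F i)) p

namespace IsPaperfold

variable {P : List ℤ → List ℤ} (hP : IsPaperfold P) {f : List ℤ}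
  (hf : ∀ x ∈ f, x = -1 ∨ x = 1) {a : ℤ} (ha : a = -1 ∨ a = 1)

include hP hf in
theorem length_eq : (P f).length = 2 ^ f.length - 1 := by
  induction f using List.reverseRecOn with
  | nil => simp [hP.1]
  | append_singleton f a ih =>
    have hf' : ∀ x ∈ f, x = -1 ∨ x = 1 := fun x hx => hf x (by simp [hx])
    rw [hP.2 f hf' a (hf a (by simp))]
    have := Nat.one_le_two_pow (n := f.length)
    simp [ih hf', pow_succ]
    omega

include hP hf ha in
theorem prefix_append_singleton : P f <+: P (f ++ [a]) :=
  hP.2 f hf a ha ▸ List.prefix_append _ _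

include hP hf ha in
theorem getElem?_append_singleton : (P (f ++ [a]))[2 ^ f.length - 1]? = some a := by
  rw [hP.2 f hf a ha, List.getElem?_append_right (by rw [hP.length_eq hf]), hP.length_eq hf]
  simp

end IsPaperfold

theorem PrefixOfSeq.apply_succ_eq {l : List ℤ} {p : ℕ → ℤ} (h : PrefixOfSeq l p) {i : ℕ} {x : ℤ}
    (hx : l[i]? = some x) : p (i + 1) = x := by
  obtain ⟨hi, rfl⟩ := List.getElem?_eq_some_iff.mp hx
  exact (h i hi).symm

theorem exists_prefixOfSeq_of_isPrefix_succ (l : ℕ → List ℤ) (hl : ∀ n, l n <+: l (n + 1))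
    (hlen : ∀ n, n < (l n).length) : ∃ p : ℕ → ℤ, p 0 = 0 ∧ ∀ n, PrefixOfSeq (l n) p := by
  have mono : ∀ {m n}, m ≤ n → l m <+: l n := fun h =>
    Nat.le_induction (List.prefix_refl _) (fun n _ ih => ih.trans (hl n)) _ h
  refine ⟨fun | 0 => 0 | i + 1 => (l i)[i]'(hlen i), rfl, fun n i hi => ?_⟩
  rcases le_total n i with h | h
  · exact (mono h).getElem hi
  · exact ((mono h).getElem (hlen i)).symm

theorem List.ofFn_coe_succ {α : Type*} (F : ℕ → α) (n : ℕ) :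
    List.ofFn (fun i : Fin (n + 1) => F i) = List.ofFn (fun i : Fin n => F i) ++ [F n] :=
  List.ofFn_succ_last

section

variable {P : List ℤ → List ℤ} (hP : IsPaperfold P) {F : ℕ → ℤ} (hF : ∀ n, F n = -1 ∨ F n = 1)

include hF in
theorem forall_mem_ofFn_eq_neg_one_or_eq_one (n : ℕ) :
    ∀ x ∈ List.ofFn (fun i : Fin n => F i), x = -1 ∨ x = 1 :=
  List.forall_mem_ofFn_iff.2 fun i => hF i

include hP hF in
theorem IsInfPaperfolding.apply_two_pow {p : ℕ → ℤ} (hp : IsInfPaperfolding P F p) (n : ℕ) :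
    p (2 ^ n) = F n := by
  have hmid := hP.getElem?_append_singleton (forall_mem_ofFn_eq_neg_one_or_eq_one hF n) (hF n)
  rw [List.length_ofFn, ← List.ofFn_coe_succ] at hmid
  rw [← (hp n).apply_succ_eq hmid, Nat.sub_add_cancel Nat.one_le_two_pow]

include hP hF in
theorem exists_isInfPaperfolding : ∃ p : ℕ → ℤ, p 0 = 0 ∧ IsInfPaperfolding P F p := by
  refine exists_prefixOfSeq_of_isPrefix_succ _ (fun n => ?_) (fun n => ?_)
  · rw [List.ofFn_coe_succ F (n + 1)]
    exact hP.prefix_append_singleton (forall_mem_ofFn_eq_neg_one_or_eq_one hF _) (hF _)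
  · rw [hP.length_eq (forall_mem_ofFn_eq_neg_one_or_eq_one hF _), List.length_ofFn]
    have := Nat.lt_two_pow_self (n := n + 1)
    omega

end

theorem IsInfPaperfolding.eq_of_apply_eq {P : List ℤ → List ℤ} (hP : IsPaperfold P)
    {F F' p p' : ℕ → ℤ} (hF : ∀ n, F n = -1 ∨ F n = 1) (hF' : ∀ n, F' n = -1 ∨ F' n = 1)
    (hp : IsInfPaperfolding P F p) (hp' : IsInfPaperfolding P F' p')
    (hpp' : ∀ n, 1 ≤ n → p n = p' n) : F = F' :=
  funext fun n => by
    rw [← hp.apply_two_pow hP hF, ← hp'.apply_two_pow hP hF', hpp' _ Nat.one_le_two_pow]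

theorem not_countable_setOf_forall_eq_neg_one_or_eq_one :
    ¬ {F : ℕ → ℤ | ∀ n, F n = -1 ∨ F n = 1}.Countable := by
  classical
  intro hc
  have : Uncountable (Set ℕ) :=
    Cardinal.aleph0_lt_mk_iff.mp (by rw [Cardinal.mk_set, Cardinal.mk_nat]; exact Cardinal.cantor _)
  let g : Set ℕ → ℕ → ℤ := fun s n => if n ∈ s then 1 else -1
  have hg : Function.Injective g := by
    intro s t hst
    ext n
    have := congrFun hst n
    by_cases n ∈ s <;> by_cases n ∈ t <;> simp_all [g]
  refine Set.not_countable_univ ((hc.preimage hg).mono fun s _ n => ?_)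
  by_cases n ∈ s <;> simp [g, *]

/-- the map `F ↦ P_F` from infinite sequences of unfolding
instructions over `{-1, 1}` to infinite paperfolding sequences is injective;
consequently the set of infinite paperfolding sequences (normalized by the
irrelevant value `p 0 = 0`) is uncountable. -/
theorem paperfold_injective_and_uncountable
    (P : List ℤ → List ℤ) (hP : IsPaperfold P) :
    (∀ F F' p p' : ℕ → ℤ,
      (∀ n, F n = -1 ∨ F n = 1) → (∀ n, F' n = -1 ∨ F' n = 1) →
      IsInfPaperfolding P F p → IsInfPaperfolding P F' p' →
      (∀ n, 1 ≤ n → p n = p' n) → F = F') ∧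
    ¬ Set.Countable {p : ℕ → ℤ | p 0 = 0 ∧
        ∃ F : ℕ → ℤ, (∀ n, F n = -1 ∨ F n = 1) ∧ IsInfPaperfolding P F p} := by
  refine ⟨fun F F' p p' hF hF' hp hp' => hp.eq_of_apply_eq hP hF hF' hp', fun hS => ?_⟩
  refine not_countable_setOf_forall_eq_neg_one_or_eq_one
    ((hS.image fun p n => p (2 ^ n)).mono fun F hF => ?_)
  obtain ⟨p, hp0, hp⟩ := exists_isInfPaperfolding hP hF
  exact ⟨p, ⟨hp0, F, hF, hp⟩, funext (hp.apply_two_pow hP hF)⟩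
end
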